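/- arXiv:2210.02369 — 7 statements merged into one kernel-verified Lean document; each statement's English description precedes it below -/
import Mathlib

section
/- Let n, m be natural numbers, let A_0, A_1, ..., A_m be real symmetric n×n matrices, b_0, ..., b_m ∈ ℝ^n and c_0, ..., c_m ∈ ℝ. Define f_i(x) = xᵀA_i x + 2 b_iᵀ x, f̄_i(x) = xᵀA_i x for x ∈ ℝ^n, and g_i(x,t) = xᵀA_i x + 2 t b_iᵀ x + 2 c_i t² for (x,t) ∈ ℝ^n × ℝ. Set F(x) = (f_0(x), ..., f_m(x)), F̄(x) = (f̄_0(x), ..., f̄_m(x)) and G(x,t) = (g_0(x,t), ..., g_m(x,t)). If the images F(ℝ^n) ⊆ ℝ^{m+1} and F̄(ℝ^n) ⊆ ℝ^{m+1} are both convex sets, then the image G(ℝ^{n+1}) ⊆ ℝ^{m+1} is a convex set. -/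
/-!
For `t ≠ 0` the homogenized map satisfies `G (x, t) = t² (F (x / t) + 2c)`, while `G (x, 0) = F̄ x`.
Since `F̄` is quadratic, its convex image is a convex cone, so the image of `G` is the union of
the cone `F̄(ℝⁿ)` and the cone generated by the convex set `F(ℝⁿ) + 2c`. By the parallelogram law
`F x + F̄ z` is the midpoint of `F (x + z)` and `F (x - z)`, so the second cone absorbs the first
under addition, and the union of two convex cones one of which absorbs the other is convex.
-/

open Matrix Set

theorem ConvexCone.convex_union {𝕜 M : Type*} [Semiring 𝕜] [PartialOrder 𝕜] [AddCommMonoid M]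
    [Module 𝕜 M] {K P : ConvexCone 𝕜 M} (hKP : ∀ x ∈ K, ∀ y ∈ P, x + y ∈ P) :
    Convex 𝕜 (K ∪ P : Set M) := by
  refine convex_iff_forall_pos.2 ?_
  have hmixed : ∀ x ∈ K, ∀ y ∈ P, ∀ ⦃a b : 𝕜⦄, 0 < a → 0 < b → a • x + b • y ∈ P :=
    fun x hx y hy a b ha hb => hKP _ (K.smul_mem ha hx) _ (P.smul_mem hb hy)
  rintro x (hx | hx) y (hy | hy) a b ha hb hab
  · exact Or.inl (K.convex hx hy ha.le hb.le hab)
  · exact Or.inr (hmixed x hx y hy ha hb)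
  · exact Or.inr (add_comm (a • x) (b • y) ▸ hmixed y hy x hx hb ha)
  · exact Or.inr (P.convex hx hy ha.le hb.le hab)

theorem QuadraticMap.map_add_add_map_sub {R M N : Type*} [CommRing R] [AddCommGroup M]
    [Module R M] [AddCommGroup N] [Module R N] (Q : QuadraticMap R M N) (x y : M) :
    Q (x + y) + Q (x - y) = 2 • Q x + 2 • Q y := by
  have h := Q.polar_neg_right x y
  simp only [QuadraticMap.polar, ← sub_eq_add_neg, Q.map_neg] at h
  linear_combination (norm := module) h

namespace QuadraticMap

variable {V W : Type*} [AddCommGroup V] [Module ℝ V] [AddCommGroup W] [Module ℝ W]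
  (Q : QuadraticMap ℝ V W) (L : V →ₗ[ℝ] W) (c : W)

open ConvexCone (hull subset_hull mem_hull_of_convex)

theorem map_sqrt_smul {s : ℝ} (hs : 0 ≤ s) (x : V) : Q (√s • x) = s • Q x := by
  rw [Q.map_smul, Real.mul_self_sqrt hs]

theorem coe_hull_range (hQ : Convex ℝ (range Q)) : (hull ℝ (range Q) : Set W) = range Q := by
  refine subset_hull.antisymm' fun y hy => ?_
  obtain ⟨r, hr, _, ⟨x, rfl⟩, rfl⟩ := (mem_hull_of_convex hQ).1 hy
  exact ⟨√r • x, Q.map_sqrt_smul hr.le x⟩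

theorem add_apply_mem_range (hF : Convex ℝ (range fun x => Q x + L x)) (x z : V) :
    Q x + L x + Q z ∈ range fun x => Q x + L x := by
  convert hF (mem_range_self (x + z)) (mem_range_self (x - z)) (a := 1 / 2) (b := 1 / 2)
    (by norm_num) (by norm_num) (by norm_num) using 1
  simp only [map_add, map_sub]
  linear_combination (norm := module) (-(1 / 2) : ℝ) • Q.map_add_add_map_sub x z

def homogenization (p : V × ℝ) : W := Q p.1 + p.2 • L p.1 + p.2 ^ 2 • c

@[simp]
theorem homogenization_mk_zero (x : V) : homogenization Q L c (x, 0) = Q x := by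
  simp [homogenization]

theorem homogenization_smul_mk (t : ℝ) (x : V) :
    homogenization Q L c (t • x, t) = t ^ 2 • (Q x + L x + c) := by
  simp only [homogenization, Q.map_smul, map_smul]
  module

theorem add_mem_hull_range (hF : Convex ℝ (range fun x => Q x + L x))
    (hS : Convex ℝ (range fun x => Q x + L x + c)) {y z : W} (hy : y ∈ range Q)
    (hz : z ∈ hull ℝ (range fun x => Q x + L x + c)) :
    y + z ∈ hull ℝ (range fun x => Q x + L x + c) := by
  obtain ⟨u, rfl⟩ := hy
  obtain ⟨s, hs, _, ⟨x, rfl⟩, rfl⟩ := (mem_hull_of_convex hS).1 hz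
  obtain ⟨w, hw⟩ := Q.add_apply_mem_range L hF x (√s⁻¹ • u)
  refine (mem_hull_of_convex hS).2 ⟨s, hs, _, ⟨w, rfl⟩, ?_⟩
  simp only at hw ⊢
  rw [hw, Q.map_sqrt_smul (inv_nonneg.2 hs.le)]
  match_scalars <;> field_simp

theorem range_homogenization (hS : Convex ℝ (range fun x => Q x + L x + c)) :
    range (homogenization Q L c) =
      range Q ∪ hull ℝ (range fun x => Q x + L x + c) := by
  ext y
  constructor
  · rintro ⟨⟨x, t⟩, rfl⟩
    rcases eq_or_ne t 0 with rfl | ht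
    · exact Or.inl ⟨x, (homogenization_mk_zero Q L c x).symm⟩
    · refine Or.inr <| (mem_hull_of_convex hS).2
        ⟨t ^ 2, by positivity, _, ⟨t⁻¹ • x, rfl⟩, ?_⟩
      dsimp only
      rw [← homogenization_smul_mk, smul_smul, mul_inv_cancel₀ ht, one_smul]
  · rintro (⟨x, rfl⟩ | hy)
    · exact ⟨(x, 0), homogenization_mk_zero Q L c x⟩
    · obtain ⟨s, hs, _, ⟨x, rfl⟩, rfl⟩ := (mem_hull_of_convex hS).1 hy
      exact ⟨(√s • x, √s), by rw [homogenization_smul_mk, Real.sq_sqrt hs.le]⟩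

theorem convex_range_homogenization (hF : Convex ℝ (range fun x => Q x + L x))
    (hQ : Convex ℝ (range Q)) : Convex ℝ (range (homogenization Q L c)) := by
  have hS : Convex ℝ (range fun x => Q x + L x + c) := by
    simpa only [← range_comp, Function.comp_def, add_comm c] using hF.translate c
  rw [range_homogenization Q L c hS, ← Q.coe_hull_range hQ]
  refine ConvexCone.convex_union fun y hy z hz => Q.add_mem_hull_range L c hF hS ?_ hz
  rwa [← Q.coe_hull_range hQ]

end QuadraticMap

theorem convexity_of_homogenized_image_general (n m : ℕ)
    (A : Fin (m + 1) → Matrix (Fin n) (Fin n) ℝ)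
    (b : Fin (m + 1) → (Fin n → ℝ)) (c : Fin (m + 1) → ℝ)
    (hF : Convex ℝ (Set.range (fun (x : Fin n → ℝ) (i : Fin (m + 1)) =>
      (x ⬝ᵥ ((A i) *ᵥ x) + 2 * ((b i) ⬝ᵥ x) : ℝ))))
    (hFbar : Convex ℝ (Set.range (fun (x : Fin n → ℝ) (i : Fin (m + 1)) =>
      (x ⬝ᵥ ((A i) *ᵥ x) : ℝ)))) :
    Convex ℝ (Set.range (fun (p : (Fin n → ℝ) × ℝ) (i : Fin (m + 1)) =>
      (p.1 ⬝ᵥ ((A i) *ᵥ p.1) + 2 * p.2 * ((b i) ⬝ᵥ p.1) + 2 * c i * p.2 ^ 2 : ℝ))) := by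
  let Q : QuadraticMap ℝ (Fin n → ℝ) (Fin (m + 1) → ℝ) :=
    LinearMap.BilinMap.toQuadraticMap <| LinearMap.mk₂ ℝ (fun x y i => x ⬝ᵥ A i *ᵥ y)
      (fun _ _ _ => by ext; simp [add_dotProduct]) (fun _ _ _ => by ext; simp)
      (fun _ _ _ => by ext; simp [mulVec_add]) (fun _ _ _ => by ext; simp [mulVec_smul])
  let L : (Fin n → ℝ) →ₗ[ℝ] Fin (m + 1) → ℝ := (2 : ℝ) • (of b).mulVecLin
  have hG : Q.homogenization L ((2 : ℝ) • c) = fun p i =>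
      p.1 ⬝ᵥ A i *ᵥ p.1 + 2 * p.2 * (b i ⬝ᵥ p.1) + 2 * c i * p.2 ^ 2 := by
    funext p i
    change p.1 ⬝ᵥ A i *ᵥ p.1 + p.2 * (2 * (b i ⬝ᵥ p.1)) + p.2 ^ 2 * (2 * c i) = _
    ring
  exact hG ▸ Q.convex_range_homogenization L _ hF hFbar

/-- Lemma 1, convexity of images of quadratic maps.
If the images of `F(x) = (xᵀAᵢx + 2bᵢᵀx)ᵢ` and `F̄(x) = (xᵀAᵢx)ᵢ` are convex, then the
image of the homogenized map `G(x,t) = (xᵀAᵢx + 2t bᵢᵀx + 2cᵢ t²)ᵢ` is convex. -/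
theorem convexity_of_homogenized_image (n m : ℕ)
    (A : Fin (m + 1) → Matrix (Fin n) (Fin n) ℝ)
    (b : Fin (m + 1) → (Fin n → ℝ)) (c : Fin (m + 1) → ℝ)
    (hA : ∀ i, (A i).IsSymm)
    (hF : Convex ℝ (Set.range (fun (x : Fin n → ℝ) (i : Fin (m + 1)) =>
      (x ⬝ᵥ ((A i) *ᵥ x) + 2 * ((b i) ⬝ᵥ x) : ℝ))))
    (hFbar : Convex ℝ (Set.range (fun (x : Fin n → ℝ) (i : Fin (m + 1)) =>
      (x ⬝ᵥ ((A i) *ᵥ x) : ℝ)))) :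
    Convex ℝ (Set.range (fun (p : (Fin n → ℝ) × ℝ) (i : Fin (m + 1)) =>
      (p.1 ⬝ᵥ ((A i) *ᵥ p.1) + 2 * p.2 * ((b i) ⬝ᵥ p.1) + 2 * c i * p.2 ^ 2 : ℝ))) :=
  convexity_of_homogenized_image_general n m A b c hF hFbar
end

section
/- Let n, m be natural numbers with n ≥ m+1, let A_0 be a real symmetric positive definite n×n matrix, let ρ_1, ..., ρ_m ∈ ℝ and set A_i = ρ_i A_0 for i = 1, ..., m. Let b_0, ..., b_m ∈ ℝ^n and c_0, ..., c_m ∈ ℝ, and define f_i(x) = xᵀA_i x + 2 b_iᵀ x, f̄_i(x) = xᵀA_i x, g_i(x,t) = xᵀA_i x + 2 t b_iᵀ x + 2 c_i t², F(x) = (f_0(x), ..., f_m(x)), F̄(x) = (f̄_0(x), ..., f̄_m(x)), G(x,t) = (g_0(x,t), ..., g_m(x,t)). Then (a) the images F(ℝ^n) and F̄(ℝ^n) are convex subsets of ℝ^{m+1}, and (b) the image G(ℝ^{n+1}) is a convex subset of ℝ^{m+1}. -/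
open Matrix Set Module LinearMap

/-!
Write `A i = α i • A 0` with `α 0 = 1`, so that `F x = ℓ x + Q x • α` for the positive definite
form `Q x = xᵀ A₀ x` and a linear map `ℓ`. Since `n ≥ m + 1`, some `z ≠ 0` has `ℓ z ∈ ℝ α`;
moving along the line `x + t z` changes `F` only by multiples of `α`, while `Q` is unbounded above
on it. Hence `F(ℝⁿ)` is the image of the convex epigraph `{(x, s) | Q x ≤ s}` under the linear map
`(x, s) ↦ ℓ x + s α`. The values of `G` with `t ≠ 0` form the cone over the convex set
`F(ℝⁿ) + 2c`, those with `t = 0` the ray `ℝ≥0 α`, and adding the ray to the cone stays in the cone.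
-/

theorem Matrix.toQuadraticForm'_apply {R ι : Type*} [CommRing R] [Fintype ι] [DecidableEq ι]
    (M : Matrix ι ι R) (x : ι → R) : M.toQuadraticForm' x = x ⬝ᵥ (M *ᵥ x) := by
  simp [Matrix.toQuadraticForm', Matrix.toLinearMap₂'_apply']

theorem QuadraticMap.convexOn_of_nonneg {E : Type*} [AddCommGroup E] [Module ℝ E]
    {Q : QuadraticForm ℝ E} (hQ : ∀ x, 0 ≤ Q x) : ConvexOn ℝ univ Q := by
  refine ⟨convex_univ, fun x _ y _ a b ha hb hab => ?_⟩
  obtain rfl : b = 1 - a := by linarith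
  obtain ⟨d, rfl⟩ : ∃ d, x = y + d := ⟨x - y, by abel⟩
  have hcomb : a • (y + d) + (1 - a) • y = y + a • d := by module
  have hgap : a * Q (y + d) + (1 - a) * Q y - Q (y + a • d) = a * (1 - a) * Q d := by
    simp only [QuadraticMap.map_add Q, QuadraticMap.map_smul, QuadraticMap.polar_smul_right,
      smul_eq_mul]
    ring
  rw [hcomb, smul_eq_mul, smul_eq_mul]
  linarith [mul_nonneg (mul_nonneg ha hb) (hQ d)]

theorem LinearMap.exists_ne_zero_map_eq_smul {K V W : Type*} [Field K] [AddCommGroup V]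
    [Module K V] [FiniteDimensional K V] [AddCommGroup W] [Module K W] [FiniteDimensional K W]
    (f : V →ₗ[K] W) {w : W} (hw : w ≠ 0) (hdim : finrank K W ≤ finrank K V) :
    ∃ z ≠ 0, ∃ c : K, f z = c • w := by
  have hker : ker (f.coprod (-toSpanSingleton K W w)) ≠ ⊥ :=
    ker_ne_bot_of_finrank_lt (by rw [finrank_prod, finrank_self]; omega)
  obtain ⟨⟨z, c⟩, hzc, hne⟩ := (Submodule.ne_bot_iff _).mp hker
  rw [mem_ker, coprod_apply, neg_apply, toSpanSingleton_apply, add_neg_eq_zero] at hzc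
  refine ⟨z, fun hz => hne ?_, c, hzc⟩
  subst hz
  simp_all [eq_comm (a := (0 : W))]

theorem exists_quadratic_eq_of_le {a b c s : ℝ} (ha : 0 < a) (hcs : c ≤ s) :
    ∃ t, a * (t * t) + b * t + c = s := by
  obtain ⟨t, ht⟩ := exists_quadratic_eq_zero ha.ne'
    ⟨√(discrim a b (c - s)), (Real.mul_self_sqrt (by rw [discrim]; nlinarith)).symm⟩
  exact ⟨t, by linarith⟩

theorem ConvexCone.convex_union_s1 {𝕜 W : Type*} [Field 𝕜] [LinearOrder 𝕜] [IsStrictOrderedRing 𝕜]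
    [AddCommGroup W] [Module 𝕜 W] (C : ConvexCone 𝕜 W) {R : Set W} (hR : Convex 𝕜 R)
    (hR_smul : ∀ c : 𝕜, 0 < c → ∀ y ∈ R, c • y ∈ R) (hadd : ∀ x ∈ C, ∀ y ∈ R, x + y ∈ C) :
    Convex 𝕜 (C ∪ R) := by
  refine convex_iff_forall_pos.2 fun x hx y hy a b ha hb hab => ?_
  rcases hx with hx | hx <;> rcases hy with hy | hy
  · exact Or.inl (C.convex hx hy ha.le hb.le hab)
  · exact Or.inl (hadd _ (C.smul_mem ha hx) _ (hR_smul b hb y hy))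
  · exact Or.inl (add_comm (a • x) _ ▸ hadd _ (C.smul_mem hb hy) _ (hR_smul a ha x hx))
  · exact Or.inr (hR hx hy ha.le hb.le hab)

namespace QuadraticMap.PosDef

variable {E W : Type*} [AddCommGroup E] [Module ℝ E] [FiniteDimensional ℝ E] [AddCommGroup W]
  [Module ℝ W] [FiniteDimensional ℝ W] {Q : QuadraticForm ℝ E} (ℓ : E →ₗ[ℝ] W) {α : W}

theorem exists_add_smul_eq_of_le (hQ : Q.PosDef) (hα : α ≠ 0)
    (hdim : finrank ℝ W ≤ finrank ℝ E) {x : E} {s : ℝ} (hxs : Q x ≤ s) :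
    ∃ y, ℓ y + Q y • α = ℓ x + s • α := by
  obtain ⟨z, hz, c, hℓz⟩ := ℓ.exists_ne_zero_map_eq_smul hα hdim
  obtain ⟨t, ht⟩ := exists_quadratic_eq_of_le (b := polar Q x z + c) (hQ z hz) hxs
  refine ⟨x + t • z, ?_⟩
  rw [ℓ.map_add, ℓ.map_smul, hℓz, QuadraticMap.map_add Q, QuadraticMap.map_smul,
    polar_smul_right, ← ht]
  module

theorem convex_range_add_smul (hQ : Q.PosDef) (hα : α ≠ 0)
    (hdim : finrank ℝ W ≤ finrank ℝ E) : Convex ℝ (range fun x => ℓ x + Q x • α) := by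
  have hrange : range (fun x => ℓ x + Q x • α) =
      ℓ.coprod (toSpanSingleton ℝ W α) '' {p : E × ℝ | p.1 ∈ univ ∧ Q p.1 ≤ p.2} := by
    ext w
    constructor
    · rintro ⟨x, rfl⟩
      exact ⟨(x, Q x), ⟨trivial, le_rfl⟩, by simp⟩
    · rintro ⟨⟨x, s⟩, ⟨-, hxs⟩, rfl⟩
      obtain ⟨y, hy⟩ := hQ.exists_add_smul_eq_of_le ℓ hα hdim hxs
      exact ⟨y, by simpa using hy⟩
  rw [hrange]
  exact (convexOn_of_nonneg hQ.nonneg).convex_epigraph.linear_image _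

theorem convex_range_homogenization (hQ : Q.PosDef) (hα : α ≠ 0)
    (hdim : finrank ℝ W ≤ finrank ℝ E) (κ : W) :
    Convex ℝ (range fun p : E × ℝ => p.2 • ℓ p.1 + Q p.1 • α + p.2 ^ 2 • κ) := by
  set S := range fun x => ℓ x + Q x • α + κ
  have hS : Convex ℝ S := by
    simpa only [← range_comp, Function.comp_def, add_comm κ] using
      (hQ.convex_range_add_smul ℓ hα hdim).translate κ
  have hS_add : ∀ p ∈ S, ∀ r : ℝ, 0 ≤ r → p + r • α ∈ S := by
    rintro _ ⟨x, rfl⟩ r hr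
    obtain ⟨y, hy⟩ := hQ.exists_add_smul_eq_of_le ℓ hα hdim (le_add_of_nonneg_right hr)
    exact ⟨y, by dsimp only; rw [hy]; module⟩
  set R := range fun x => Q x • α
  have hR : Convex ℝ R := by simpa using hQ.convex_range_add_smul 0 hα hdim
  have hR_smul : ∀ c : ℝ, 0 < c → ∀ y ∈ R, c • y ∈ R := by
    rintro c hc _ ⟨x, rfl⟩
    refine ⟨√c • x, ?_⟩
    dsimp only
    rw [QuadraticMap.map_smul, smul_eq_mul, Real.mul_self_sqrt hc.le, smul_smul]
  have hadd : ∀ p ∈ ConvexCone.hull ℝ S, ∀ y ∈ R, p + y ∈ ConvexCone.hull ℝ S := by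
    rintro p hp _ ⟨x, rfl⟩
    obtain ⟨c, hc, q, hq, rfl⟩ := (ConvexCone.mem_hull_of_convex hS).1 hp
    refine (ConvexCone.mem_hull_of_convex hS).2 ⟨c, hc, _,
      hS_add q hq (Q x / c) (div_nonneg (hQ.nonneg x) hc.le), ?_⟩
    dsimp only
    rw [smul_add, smul_smul, mul_div_cancel₀ _ hc.ne']
  have hrange : range (fun p : E × ℝ => p.2 • ℓ p.1 + Q p.1 • α + p.2 ^ 2 • κ) =
      (ConvexCone.hull ℝ S : Set W) ∪ R := by
    ext w
    constructor
    · rintro ⟨⟨x, t⟩, rfl⟩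
      rcases eq_or_ne t 0 with rfl | ht
      · exact Or.inr ⟨x, by simp⟩
      · refine Or.inl ((ConvexCone.mem_hull_of_convex hS).2
          ⟨t ^ 2, by positivity, _, ⟨t⁻¹ • x, rfl⟩, ?_⟩)
        simp only [map_smul, QuadraticMap.map_smul, smul_add, smul_smul, smul_eq_mul]
        match_scalars <;> field_simp
    · rintro (hw | ⟨x, rfl⟩)
      · obtain ⟨c, hc, _, ⟨y, rfl⟩, rfl⟩ := (ConvexCone.mem_hull_of_convex hS).1 hw
        refine ⟨(√c • y, √c), ?_⟩
        simp only [map_smul, QuadraticMap.map_smul, smul_add, smul_smul, smul_eq_mul,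
          Real.sq_sqrt hc.le, Real.mul_self_sqrt hc.le]
      · exact ⟨(x, 0), by simp⟩
  rw [hrange]
  exact (ConvexCone.hull ℝ S).convex_union_s1 hR hR_smul hadd

end QuadraticMap.PosDef

theorem convexity_of_images_scalar_multiples_general (n m : ℕ) (hnm : n ≥ m + 1)
    (A : Fin (m + 1) → Matrix (Fin n) (Fin n) ℝ)
    (b : Fin (m + 1) → (Fin n → ℝ)) (c : Fin (m + 1) → ℝ)
    (ρ : Fin (m + 1) → ℝ)
    (hA0posdef : ∀ x : Fin n → ℝ, x ≠ 0 → 0 < x ⬝ᵥ ((A 0) *ᵥ x))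
    (hAi : ∀ i : Fin (m + 1), i ≠ 0 → A i = ρ i • A 0) :
    Convex ℝ (Set.range (fun (x : Fin n → ℝ) (i : Fin (m + 1)) =>
      (x ⬝ᵥ ((A i) *ᵥ x) + 2 * ((b i) ⬝ᵥ x) : ℝ))) ∧
    Convex ℝ (Set.range (fun (x : Fin n → ℝ) (i : Fin (m + 1)) =>
      (x ⬝ᵥ ((A i) *ᵥ x) : ℝ))) ∧
    Convex ℝ (Set.range (fun (p : (Fin n → ℝ) × ℝ) (i : Fin (m + 1)) =>
      (p.1 ⬝ᵥ ((A i) *ᵥ p.1) + 2 * p.2 * ((b i) ⬝ᵥ p.1) + 2 * c i * p.2 ^ 2 : ℝ))) := by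
  set Q := (A 0).toQuadraticForm'
  have hQ : Q.PosDef := fun x hx => (A 0).toQuadraticForm'_apply x ▸ hA0posdef x hx
  set α := Function.update ρ 0 1
  have hα : α ≠ 0 := fun h => by simpa [α] using congrFun h 0
  have hA_apply (i : Fin (m + 1)) (x : Fin n → ℝ) : x ⬝ᵥ (A i *ᵥ x) = Q x * α i := by
    rcases eq_or_ne i 0 with rfl | hi
    · simp [α, Q, toQuadraticForm'_apply]
    · simp [α, Q, hi, hAi i hi, toQuadraticForm'_apply, smul_mulVec, mul_comm]
  have hdim : finrank ℝ (Fin (m + 1) → ℝ) ≤ finrank ℝ (Fin n → ℝ) := by simpa using hnm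
  set ℓ := (2 : ℝ) • (Matrix.of b).mulVecLin
  have hℓ_apply (x : Fin n → ℝ) (i : Fin (m + 1)) : ℓ x i = 2 * (b i ⬝ᵥ x) := by
    simp [ℓ, mulVec]
  refine ⟨?_, ?_, ?_⟩
  · have hF (x : Fin n → ℝ) : (fun i => x ⬝ᵥ A i *ᵥ x + 2 * (b i ⬝ᵥ x)) = ℓ x + Q x • α := by
      ext i
      simp [hA_apply, hℓ_apply, add_comm]
    exact funext hF ▸ hQ.convex_range_add_smul ℓ hα hdim
  · have hF (x : Fin n → ℝ) : (fun i => x ⬝ᵥ A i *ᵥ x) = (0 : _ →ₗ[ℝ] _) x + Q x • α := by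
      ext i
      simp [hA_apply]
    exact funext hF ▸ hQ.convex_range_add_smul 0 hα hdim
  · have hG (p : (Fin n → ℝ) × ℝ) :
        (fun i => p.1 ⬝ᵥ A i *ᵥ p.1 + 2 * p.2 * (b i ⬝ᵥ p.1) + 2 * c i * p.2 ^ 2) =
          p.2 • ℓ p.1 + Q p.1 • α + p.2 ^ 2 • (2 • c) := by
      ext i
      simp [hA_apply, hℓ_apply]
      ring
    exact funext hG ▸ hQ.convex_range_homogenization ℓ hα hdim (2 • c)

/-- Corollary 1.  If `n ≥ m+1`, `A 0` is symmetric positive definite and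
`A i = ρ i • A 0` for `i ≠ 0`, then the images of `F`, `F̄` and of the homogenized map `G`
are convex. -/
theorem convexity_of_images_scalar_multiples (n m : ℕ) (hnm : n ≥ m + 1)
    (A : Fin (m + 1) → Matrix (Fin n) (Fin n) ℝ)
    (b : Fin (m + 1) → (Fin n → ℝ)) (c : Fin (m + 1) → ℝ)
    (ρ : Fin (m + 1) → ℝ)
    (hA0symm : (A 0).IsSymm)
    (hA0posdef : ∀ x : Fin n → ℝ, x ≠ 0 → 0 < x ⬝ᵥ ((A 0) *ᵥ x))
    (hAi : ∀ i : Fin (m + 1), i ≠ 0 → A i = ρ i • A 0) :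
    Convex ℝ (Set.range (fun (x : Fin n → ℝ) (i : Fin (m + 1)) =>
      (x ⬝ᵥ ((A i) *ᵥ x) + 2 * ((b i) ⬝ᵥ x) : ℝ))) ∧
    Convex ℝ (Set.range (fun (x : Fin n → ℝ) (i : Fin (m + 1)) =>
      (x ⬝ᵥ ((A i) *ᵥ x) : ℝ))) ∧
    Convex ℝ (Set.range (fun (p : (Fin n → ℝ) × ℝ) (i : Fin (m + 1)) =>
      (p.1 ⬝ᵥ ((A i) *ᵥ p.1) + 2 * p.2 * ((b i) ⬝ᵥ p.1) + 2 * c i * p.2 ^ 2 : ℝ))) :=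
  convexity_of_images_scalar_multiples_general n m hnm A b c ρ hA0posdef hAi
end

section
/- (Robust alternative theorem.) Let A, B₁, B₂ be real symmetric n×n matrices, a, b₁, b₂ ∈ ℝ^n, and γ, α, β, μ₁, μ₂, δ₁, δ₂ ∈ ℝ with μ₁ ≤ μ₂, δ₁ ≤ δ₂ and α < β. Assume that the set Ω_W is convex. Then exactly one of the following two assertions holds: (a) there exists x ∈ ℝ^n such that ½xᵀAx + aᵀx + γ < 0 and α < ½xᵀ(B₁+μB₂)x + (b₁+δb₂)ᵀx < β for all μ ∈ [μ₁,μ₂] and all δ ∈ [δ₁,δ₂]; (b) there exist (λ₀,λ₁,λ₂) ∈ ℝ³₊ \ {0}, μ_α, μ_β ∈ [μ₁,μ₂] with μ_α + μ_β = μ₁ + μ₂, and δ_α, δ_β ∈ [δ₁,δ₂] such that for all x ∈ ℝ^n: λ₀(½xᵀAx + aᵀx + γ) + λ₁(½xᵀ(B₁+μ_βB₂)x + (b₁+δ_βb₂)ᵀx − β) + λ₂(α − (½xᵀ(B₁+μ_αB₂)x + (b₁+δ_αb₂)ᵀx)) ≥ 0. -/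
/-!
Homogenize with `y = (x, t)`: the data of (a) become quadratic forms on `ℝⁿ × ℝ`, affine in `μ`
and in `δ`, so the max and min over `μ ∈ [μ₁, μ₂]` in `Ω_W` are attained at `μ₁` or `μ₂`.

If (a) has no solution then `0 ∉ Ω_W`, since a point of `Ω_W` below `0` has `t ≠ 0` and
dehomogenizes to a solution of (a). Separating `0` from the open convex set `Ω_W` gives weights
`w ≥ 0`, `w ≠ 0` for its five coordinates. With `s = ½ xᵀB₂x`, the weighted sum is a Lagrangian
`N` (β-constraints at `μ₁`, α-constraints at `μ₂`) on `{s ≤ 0}` and `N + K s` with `K ≥ 0` on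
`{s ≥ 0}`, nonnegative in both cases. As `N ≥ 0` on the isotropic cone of `s`,
`sup_{s>0} (-N/s) ≤ inf_{s<0} (N/(-s))`, so `N + τ s ≥ 0` everywhere for some `τ ∈ [0, K]`:
this is the Lagrangian with β-constraints at `μ₁ + θ` and α-constraints at `μ₂ - θ`, and
averaging `δ₁, δ₂` with the weights gives (b). At a solution of (a) every bracket in (b) is
negative, so (a) and (b) exclude each other.
-/

open Matrix Set Pointwise

/-- The set `Ω_W ⊆ ℝ⁵`: the Minkowski sum of the image of `y = (x,t) ∈ ℝ^{n+1}` under the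
five quadratic forms `½yᵀH₀y`, `max_{μ∈[μ₁,μ₂]} ½yᵀ(W_{1β}+μW₂)y`,
`max_{μ∈[μ₁,μ₂]} ½yᵀ(W_{2β}+μW₂)y`, `−min_{μ∈[μ₁,μ₂]} ½yᵀ(W_{1α}+μW₂)y`,
`−min_{μ∈[μ₁,μ₂]} ½yᵀ(W_{2α}+μW₂)y` with the open positive orthant of `ℝ⁵`. -/
noncomputable def OmegaW (n : ℕ) (A B₁ B₂ : Matrix (Fin n) (Fin n) ℝ)
    (a b₁ b₂ : Fin n → ℝ) (γ α β μ₁ μ₂ δ₁ δ₂ : ℝ) : Set (Fin 5 → ℝ) :=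
  (Set.range (fun y : (Fin n → ℝ) × ℝ =>
    ![(1 / 2) * (y.1 ⬝ᵥ (A *ᵥ y.1)) + y.2 * (a ⬝ᵥ y.1) + γ * y.2 ^ 2,
      sSup ((fun μ => (1 / 2) * (y.1 ⬝ᵥ ((B₁ + μ • B₂) *ᵥ y.1))
        + y.2 * ((b₁ + δ₁ • b₂) ⬝ᵥ y.1) - β * y.2 ^ 2) '' Icc μ₁ μ₂),
      sSup ((fun μ => (1 / 2) * (y.1 ⬝ᵥ ((B₁ + μ • B₂) *ᵥ y.1))
        + y.2 * ((b₁ + δ₂ • b₂) ⬝ᵥ y.1) - β * y.2 ^ 2) '' Icc μ₁ μ₂),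
      -sInf ((fun μ => (1 / 2) * (y.1 ⬝ᵥ ((B₁ + μ • B₂) *ᵥ y.1))
        + y.2 * ((b₁ + δ₁ • b₂) ⬝ᵥ y.1) - α * y.2 ^ 2) '' Icc μ₁ μ₂),
      -sInf ((fun μ => (1 / 2) * (y.1 ⬝ᵥ ((B₁ + μ • B₂) *ᵥ y.1))
        + y.2 * ((b₁ + δ₂ • b₂) ⬝ᵥ y.1) - α * y.2 ^ 2) '' Icc μ₁ μ₂)]))
  + {z : Fin 5 → ℝ | ∀ i, 0 < z i}

theorem le_max_of_affine {f : ℝ → ℝ} {c d lo hi v : ℝ} (hf : ∀ μ, f μ = c + μ * d)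
    (hv : v ∈ Icc lo hi) : f v ≤ max (f lo) (f hi) := by
  simp only [hf]
  rcases le_total 0 d with hd | hd
  · exact le_max_of_le_right (by nlinarith [hv.2])
  · exact le_max_of_le_left (by nlinarith [hv.1])

theorem min_le_of_affine {f : ℝ → ℝ} {c d lo hi v : ℝ} (hf : ∀ μ, f μ = c + μ * d)
    (hv : v ∈ Icc lo hi) : min (f lo) (f hi) ≤ f v := by
  simp only [hf]
  rcases le_total 0 d with hd | hd
  · exact min_le_of_left_le (by nlinarith [hv.1])
  · exact min_le_of_right_le (by nlinarith [hv.2])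

theorem csSup_image_Icc_of_affine {f : ℝ → ℝ} {c d lo hi : ℝ} (hf : ∀ μ, f μ = c + μ * d)
    (h : lo ≤ hi) : sSup (f '' Icc lo hi) = max (f lo) (f hi) := by
  refine IsGreatest.csSup_eq ⟨?_, ?_⟩
  · rcases max_choice (f lo) (f hi) with hm | hm <;> rw [hm]
    exacts [mem_image_of_mem f (left_mem_Icc.2 h), mem_image_of_mem f (right_mem_Icc.2 h)]
  · rintro _ ⟨v, hv, rfl⟩
    exact le_max_of_affine hf hv

theorem csInf_image_Icc_of_affine {f : ℝ → ℝ} {c d lo hi : ℝ} (hf : ∀ μ, f μ = c + μ * d)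
    (h : lo ≤ hi) : sInf (f '' Icc lo hi) = min (f lo) (f hi) := by
  refine IsLeast.csInf_eq ⟨?_, ?_⟩
  · rcases min_choice (f lo) (f hi) with hm | hm <;> rw [hm]
    exacts [mem_image_of_mem f (left_mem_Icc.2 h), mem_image_of_mem f (right_mem_Icc.2 h)]
  · rintro _ ⟨v, hv, rfl⟩
    exact min_le_of_affine hf hv

theorem exists_mem_Icc_mul_add_mul_eq {p q lo hi : ℝ} (hp : 0 ≤ p) (hq : 0 ≤ q) (h : lo ≤ hi) :
    ∃ d ∈ Icc lo hi, p * lo + q * hi = (p + q) * d := by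
  rcases (add_nonneg hp hq).eq_or_lt with hpq | hpq
  · refine ⟨lo, left_mem_Icc.2 h, ?_⟩
    rw [show p = 0 by linarith, show q = 0 by linarith]
    ring
  · refine ⟨(p * lo + q * hi) / (p + q), ⟨?_, ?_⟩, (mul_div_cancel₀ _ hpq.ne').symm⟩
    · rw [le_div_iff₀ hpq]; nlinarith
    · rw [div_le_iff₀ hpq]; nlinarith

theorem dotProduct_neg_of_nonneg_of_ne_zero {ι : Type*} [Fintype ι] {l t : ι → ℝ}
    (hl : ∀ i, 0 ≤ l i) (hl0 : l ≠ 0) (ht : ∀ i, t i < 0) : l ⬝ᵥ t < 0 := by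
  obtain ⟨i, hi⟩ := Function.ne_iff.1 hl0
  rw [← neg_pos, dotProduct, ← Finset.sum_neg_distrib]
  exact Finset.sum_pos'
    (fun j _ => neg_nonneg.2 (mul_nonpos_of_nonneg_of_nonpos (hl j) (ht j).le))
    ⟨i, Finset.mem_univ i, neg_pos.2 (mul_neg_of_pos_of_neg ((hl i).lt_of_ne' hi) (ht i))⟩

theorem exists_nonneg_ne_zero_dotProduct_nonneg {ι : Type*} [Fintype ι] {S : Set (ι → ℝ)}
    (h0 : 0 ∈ S) (hconv : Convex ℝ (S + {z | ∀ i, 0 < z i}))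
    (hnot : 0 ∉ S + {z | ∀ i, 0 < z i}) :
    ∃ w : ι → ℝ, (∀ i, 0 ≤ w i) ∧ w ≠ 0 ∧ ∀ v ∈ S, 0 ≤ w ⬝ᵥ v := by
  classical
  have hopen : IsOpen {z : ι → ℝ | ∀ i, 0 < z i} := by
    simpa [Set.pi] using isOpen_set_pi finite_univ fun (_ : ι) _ => isOpen_Ioi (a := (0 : ℝ))
  obtain ⟨f, hf⟩ := geometric_hahn_banach_point_open hconv hopen.add_left hnot
  set w : ι → ℝ := fun i => f fun j => if i = j then 1 else 0
  have hfw : ∀ z, f z = w ⬝ᵥ z := fun z =>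
    (f.toLinearMap.pi_apply_eq_sum_univ z).trans (by simp [dotProduct, w, mul_comm])
  have hpos : ∀ v ∈ S, ∀ z, (∀ i, 0 < z i) → 0 < w ⬝ᵥ (v + z) := fun v hv z hz => by
    simpa [hfw] using hf _ (add_mem_add hv hz)
  have h1 : 0 < w ⬝ᵥ 1 := by simpa using hpos 0 h0 1 fun _ => one_pos
  have hnonneg : ∀ v ∈ S, ∀ u, (∀ i, 0 ≤ u i) → 0 ≤ w ⬝ᵥ (v + u) := by
    refine fun v hv u hu => le_of_forall_pos_lt_add fun ε hε => ?_
    have := hpos v hv (u + (ε / w ⬝ᵥ 1) • 1) fun i => by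
      have := hu i
      simp only [Pi.add_apply, Pi.smul_apply, Pi.one_apply, smul_eq_mul, mul_one]
      positivity
    simpa [← add_assoc, dotProduct_add, div_mul_cancel₀ ε h1.ne'] using this
  refine ⟨w, fun i => ?_, fun hw => by simp [hw] at h1, fun v hv => ?_⟩
  · simpa using hnonneg 0 h0 (Pi.single i 1) fun j => by
      by_cases h : j = i <;> simp [h]
  · simpa using hnonneg v hv 0 fun _ => le_rfl

namespace QuadraticMap

variable {E : Type*} [AddCommGroup E] [Module ℝ E]

theorem map_smul_add_smul (Q : QuadraticForm ℝ E) (a b : ℝ) (u w : E) :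
    Q (a • u + b • w) = a ^ 2 * Q u + a * b * polar Q u w + b ^ 2 * Q w := by
  rw [show Q (a • u + b • w) = Q (a • u) + Q (b • w) + polar Q (a • u) (b • w) by
      simp only [polar]; ring,
    polar_smul_left, polar_smul_right, QuadraticMap.map_smul, QuadraticMap.map_smul]
  simp only [smul_eq_mul]
  ring

theorem map_eq_snd_sq_mul_map_mk_one {F : Type*} [AddCommGroup F] [Module ℝ F]
    (Q : QuadraticForm ℝ (F × ℝ)) {y : F × ℝ} (h : y.2 ≠ 0) :
    Q y = y.2 ^ 2 * Q (y.2⁻¹ • y.1, 1) := by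
  conv_lhs => rw [show y = y.2 • (y.2⁻¹ • y.1, (1 : ℝ)) by ext <;> simp [smul_smul, h]]
  rw [QuadraticMap.map_smul, smul_eq_mul, pow_two]

/-- `N` is evaluated at the two isotropic vectors `(-2 s w) • u + (σ ± r) • w` of `s` in the
plane of `u` and `w`, where `σ = polar s u w` and `r² = σ² - 4 s u s w`; the weights `r ∓ σ`
eliminate the polar term of `N`. -/
theorem apply_mul_apply_le_of_nonneg_on_isotropic (N s : QuadraticForm ℝ E)
    (hN : ∀ y, s y = 0 → 0 ≤ N y) {u w : E} (hu : 0 < s u) (hw : s w < 0) :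
    N u * s w ≤ N w * s u := by
  set σ := polar s u w
  set r := √(σ ^ 2 - 4 * s u * s w)
  have hr : r ^ 2 = σ ^ 2 - 4 * s u * s w := Real.sq_sqrt (by nlinarith)
  have hrσ : |σ| < r := abs_lt_of_sq_lt_sq (by nlinarith) (Real.sqrt_nonneg _)
  have h₁ : 0 ≤ N ((-2 * s w) • u + (σ + r) • w) := hN _ (by
    rw [map_smul_add_smul]; linear_combination s w * hr)
  have h₂ : 0 ≤ N ((-2 * s w) • u + (σ - r) • w) := hN _ (by
    rw [map_smul_add_smul]; linear_combination s w * hr)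
  rw [map_smul_add_smul] at h₁ h₂
  have key : 0 ≤ 8 * r * -s w * (N w * s u - N u * s w) := by
    have := add_nonneg (mul_nonneg (by linarith [le_abs_self σ] : 0 ≤ r - σ) h₁)
      (mul_nonneg (by linarith [neg_abs_le σ] : 0 ≤ r + σ) h₂)
    linear_combination this + 2 * r * (N w) * hr
  have : 0 < 8 * r * -s w := mul_pos (by linarith [abs_nonneg σ]) (by linarith)
  nlinarith

/-- The multiplier is `max 0 (sup_{s > 0} (-N / s))`; when `{s > 0}` is empty, `Real.sSup_le`
still applies because `sSup ∅ = 0`. -/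
theorem exists_mem_Icc_forall_nonneg_add_mul (N s : QuadraticForm ℝ E) {K : ℝ} (hK : 0 ≤ K)
    (hN : ∀ y, s y ≤ 0 → 0 ≤ N y) (hP : ∀ y, 0 ≤ s y → 0 ≤ N y + K * s y) :
    ∃ τ ∈ Icc 0 K, ∀ y, 0 ≤ N y + τ * s y := by
  set S := (fun y => -N y / s y) '' {y | 0 < s y}
  have hSK : ∀ r ∈ S, r ≤ K := by
    rintro _ ⟨y, hy, rfl⟩
    rw [div_le_iff₀ hy]
    linarith [hP y hy.le]
  refine ⟨max 0 (sSup S), ⟨le_max_left _ _, max_le hK (Real.sSup_le hSK hK)⟩, fun y => ?_⟩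
  rcases lt_trichotomy (s y) 0 with hy | hy | hy
  · have hbound : N y / -s y ∈ upperBounds S := by
      rintro _ ⟨z, hz, rfl⟩
      rw [div_le_div_iff₀ hz (neg_pos.2 hy)]
      linarith [apply_mul_apply_le_of_nonneg_on_isotropic N s (fun y hy => hN y hy.le) hz hy]
    have hNy : 0 ≤ N y / -s y := div_nonneg (hN y hy.le) (neg_nonneg.2 hy.le)
    have := max_le hNy (Real.sSup_le hbound hNy)
    rw [le_div_iff₀ (neg_pos.2 hy)] at this
    linarith
  · rw [hy, mul_zero, add_zero]
    exact hN y hy.le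
  · have := (le_csSup ⟨K, hSK⟩ ⟨y, hy, rfl⟩).trans (le_max_right 0 (sSup S))
    rw [div_le_iff₀ hy] at this
    linarith

theorem exists_mem_Icc_forall_nonneg_add_mul_mul (N s : QuadraticForm ℝ E) {K : ℝ}
    (hK : 0 ≤ K) (hN : ∀ y, s y ≤ 0 → 0 ≤ N y) (hP : ∀ y, 0 ≤ s y → 0 ≤ N y + K * s y) :
    ∃ t ∈ Icc (0 : ℝ) 1, ∀ y, 0 ≤ N y + t * K * s y := by
  obtain ⟨τ, ⟨hτ0, hτK⟩, hτ⟩ := exists_mem_Icc_forall_nonneg_add_mul N s hK hN hP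
  refine ⟨τ / K, ⟨div_nonneg hτ0 hK, div_le_one_of_le₀ hτK hK⟩, ?_⟩
  rcases hK.eq_or_lt with rfl | hKpos
  · simpa [le_antisymm hτK hτ0] using hτ
  · simpa [div_mul_cancel₀ τ hKpos.ne'] using hτ

end QuadraticMap

namespace RobustAlternative

variable {n : ℕ}

/-- The homogenization `(x, t) ↦ ½ xᵀMx + t vᵀx + c t²` of `x ↦ ½ xᵀMx + vᵀx + c`. -/
noncomputable def homQuad (M : Matrix (Fin n) (Fin n) ℝ) (v : Fin n → ℝ) (c : ℝ) :
    QuadraticForm ℝ ((Fin n → ℝ) × ℝ) :=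
  LinearMap.BilinMap.toQuadraticMap <| LinearMap.mk₂ ℝ
    (fun y z => (1 / 2) * (y.1 ⬝ᵥ (M *ᵥ z.1)) + y.2 * (v ⬝ᵥ z.1) + c * (y.2 * z.2))
    (fun y y' z => by simp only [Prod.fst_add, Prod.snd_add, add_dotProduct]; ring)
    (fun r y z => by simp only [Prod.smul_fst, Prod.smul_snd, smul_dotProduct, smul_eq_mul]; ring)
    (fun y z z' => by simp only [Prod.fst_add, Prod.snd_add, mulVec_add, dotProduct_add]; ring)
    (fun r y z => by
      simp only [Prod.smul_fst, Prod.smul_snd, mulVec_smul, dotProduct_smul, smul_eq_mul]; ring)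

theorem homQuad_apply (M : Matrix (Fin n) (Fin n) ℝ) (v : Fin n → ℝ) (c : ℝ)
    (y : (Fin n → ℝ) × ℝ) :
    homQuad M v c y = (1 / 2) * (y.1 ⬝ᵥ (M *ᵥ y.1)) + y.2 * (v ⬝ᵥ y.1) + c * y.2 ^ 2 := by
  simp [homQuad, pow_two]

theorem homQuad_mk_one (M : Matrix (Fin n) (Fin n) ℝ) (v : Fin n → ℝ) (c : ℝ) (x : Fin n → ℝ) :
    homQuad M v c (x, 1) = (1 / 2) * (x ⬝ᵥ (M *ᵥ x)) + v ⬝ᵥ x + c := by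
  simp [homQuad_apply]

variable (A B₁ B₂ : Matrix (Fin n) (Fin n) ℝ) (a b₁ b₂ : Fin n → ℝ) (γ α β μ₁ μ₂ δ₁ δ₂ : ℝ)

noncomputable def objective (x : Fin n → ℝ) : ℝ := (1 / 2) * (x ⬝ᵥ (A *ᵥ x)) + a ⬝ᵥ x + γ

noncomputable def constraint (μ δ : ℝ) (x : Fin n → ℝ) : ℝ :=
  (1 / 2) * (x ⬝ᵥ ((B₁ + μ • B₂) *ᵥ x)) + (b₁ + δ • b₂) ⬝ᵥ x

/-- The homogenization of `constraint μ δ - κ`; for `κ = β` and `κ = α` these are the forms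
`½ yᵀ(W_{iβ} + μW₂)y` and `½ yᵀ(W_{iα} + μW₂)y` of `Ω_W`. -/
noncomputable def constraintForm (μ δ κ : ℝ) : QuadraticForm ℝ ((Fin n → ℝ) × ℝ) :=
  homQuad (B₁ + μ • B₂) (b₁ + δ • b₂) (-κ)

noncomputable def omegaVec (y : (Fin n → ℝ) × ℝ) : Fin 5 → ℝ :=
  ![homQuad A a γ y,
    max (constraintForm B₁ B₂ b₁ b₂ μ₁ δ₁ β y) (constraintForm B₁ B₂ b₁ b₂ μ₂ δ₁ β y),
    max (constraintForm B₁ B₂ b₁ b₂ μ₁ δ₂ β y) (constraintForm B₁ B₂ b₁ b₂ μ₂ δ₂ β y),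
    -min (constraintForm B₁ B₂ b₁ b₂ μ₁ δ₁ α y) (constraintForm B₁ B₂ b₁ b₂ μ₂ δ₁ α y),
    -min (constraintForm B₁ B₂ b₁ b₂ μ₁ δ₂ α y) (constraintForm B₁ B₂ b₁ b₂ μ₂ δ₂ α y)]

noncomputable def lagrangian (w : Fin 5 → ℝ) (μb μa : ℝ) : QuadraticForm ℝ ((Fin n → ℝ) × ℝ) :=
  w 0 • homQuad A a γ + w 1 • constraintForm B₁ B₂ b₁ b₂ μb δ₁ β +
    w 2 • constraintForm B₁ B₂ b₁ b₂ μb δ₂ β - w 3 • constraintForm B₁ B₂ b₁ b₂ μa δ₁ α -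
    w 4 • constraintForm B₁ B₂ b₁ b₂ μa δ₂ α

variable {A B₁ B₂ a b₁ b₂ γ α β μ₁ μ₂ δ₁ δ₂}

theorem constraintForm_mk_one (μ δ κ : ℝ) (x : Fin n → ℝ) :
    constraintForm B₁ B₂ b₁ b₂ μ δ κ (x, 1) = constraint B₁ B₂ b₁ b₂ μ δ x - κ := by
  rw [constraintForm, homQuad_mk_one, constraint, sub_eq_add_neg]

theorem constraintForm_eq_add_mul_left (μ δ κ : ℝ) (y : (Fin n → ℝ) × ℝ) :
    constraintForm B₁ B₂ b₁ b₂ μ δ κ y =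
      constraintForm B₁ B₂ b₁ b₂ 0 δ κ y + μ * homQuad B₂ 0 0 y := by
  simp only [constraintForm, homQuad_apply, add_mulVec, smul_mulVec, dotProduct_add,
    dotProduct_smul, smul_eq_mul, zero_smul, add_zero, zero_dotProduct]
  ring

theorem constraintForm_eq_add_mul_right (μ δ κ : ℝ) (y : (Fin n → ℝ) × ℝ) :
    constraintForm B₁ B₂ b₁ b₂ μ δ κ y =
      constraintForm B₁ B₂ b₁ b₂ μ 0 κ y + δ * homQuad 0 b₂ 0 y := by
  simp only [constraintForm, homQuad_apply, add_dotProduct, smul_dotProduct, smul_eq_mul,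
    zero_smul, add_zero, zero_mulVec, dotProduct_zero]
  ring

theorem constraintForm_apply_sub (μ μ' δ κ : ℝ) (y : (Fin n → ℝ) × ℝ) :
    constraintForm B₁ B₂ b₁ b₂ μ' δ κ y - constraintForm B₁ B₂ b₁ b₂ μ δ κ y =
      (μ' - μ) * homQuad B₂ 0 0 y := by
  rw [constraintForm_eq_add_mul_left μ', constraintForm_eq_add_mul_left μ]
  ring

theorem constraintForm_le_max {μ δ : ℝ} (hμ : μ ∈ Icc μ₁ μ₂) (hδ : δ ∈ Icc δ₁ δ₂) (κ : ℝ)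
    (y : (Fin n → ℝ) × ℝ) :
    constraintForm B₁ B₂ b₁ b₂ μ δ κ y ≤
      max (max (constraintForm B₁ B₂ b₁ b₂ μ₁ δ₁ κ y) (constraintForm B₁ B₂ b₁ b₂ μ₁ δ₂ κ y))
        (max (constraintForm B₁ B₂ b₁ b₂ μ₂ δ₁ κ y) (constraintForm B₁ B₂ b₁ b₂ μ₂ δ₂ κ y)) :=
  (le_max_of_affine (constraintForm_eq_add_mul_left · δ κ y) hμ).trans <|
    max_le_max (le_max_of_affine (constraintForm_eq_add_mul_right μ₁ · κ y) hδ)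
      (le_max_of_affine (constraintForm_eq_add_mul_right μ₂ · κ y) hδ)

theorem min_le_constraintForm {μ δ : ℝ} (hμ : μ ∈ Icc μ₁ μ₂) (hδ : δ ∈ Icc δ₁ δ₂) (κ : ℝ)
    (y : (Fin n → ℝ) × ℝ) :
    min (min (constraintForm B₁ B₂ b₁ b₂ μ₁ δ₁ κ y) (constraintForm B₁ B₂ b₁ b₂ μ₁ δ₂ κ y))
        (min (constraintForm B₁ B₂ b₁ b₂ μ₂ δ₁ κ y) (constraintForm B₁ B₂ b₁ b₂ μ₂ δ₂ κ y)) ≤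
      constraintForm B₁ B₂ b₁ b₂ μ δ κ y :=
  (min_le_min (min_le_of_affine (constraintForm_eq_add_mul_right μ₁ · κ y) hδ)
    (min_le_of_affine (constraintForm_eq_add_mul_right μ₂ · κ y) hδ)).trans <|
    min_le_of_affine (constraintForm_eq_add_mul_left · δ κ y) hμ

theorem omegaW_eq (hμ : μ₁ ≤ μ₂) :
    OmegaW n A B₁ B₂ a b₁ b₂ γ α β μ₁ μ₂ δ₁ δ₂ =
      range (omegaVec A B₁ B₂ a b₁ b₂ γ α β μ₁ μ₂ δ₁ δ₂) + {z | ∀ i, 0 < z i} := by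
  have hC : ∀ (y : (Fin n → ℝ) × ℝ) δ κ,
      (fun μ => (1 / 2) * (y.1 ⬝ᵥ ((B₁ + μ • B₂) *ᵥ y.1)) + y.2 * ((b₁ + δ • b₂) ⬝ᵥ y.1)
        - κ * y.2 ^ 2) = fun μ => constraintForm B₁ B₂ b₁ b₂ μ δ κ y := fun y δ κ => by
    funext μ
    rw [constraintForm, homQuad_apply]
    ring
  have hsSup y δ κ := csSup_image_Icc_of_affine (constraintForm_eq_add_mul_left (B₁ := B₁)
    (B₂ := B₂) (b₁ := b₁) (b₂ := b₂) · δ κ y) hμ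
  have hsInf y δ κ := csInf_image_Icc_of_affine (constraintForm_eq_add_mul_left (B₁ := B₁)
    (B₂ := B₂) (b₁ := b₁) (b₂ := b₂) · δ κ y) hμ
  simp only [OmegaW, hC, hsSup, hsInf]
  congr 2
  funext y
  rw [omegaVec, homQuad_apply]

theorem omegaVec_zero : omegaVec A B₁ B₂ a b₁ b₂ γ α β μ₁ μ₂ δ₁ δ₂ 0 = 0 := by
  ext i
  fin_cases i <;> simp [omegaVec]

theorem exists_robust_solution_of_zero_mem
    (h : 0 ∈ range (omegaVec A B₁ B₂ a b₁ b₂ γ α β μ₁ μ₂ δ₁ δ₂) + {z | ∀ i, 0 < z i}) :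
    ∃ x, objective A a γ x < 0 ∧ ∀ μ ∈ Icc μ₁ μ₂, ∀ δ ∈ Icc δ₁ δ₂,
      α < constraint B₁ B₂ b₁ b₂ μ δ x ∧ constraint B₁ B₂ b₁ b₂ μ δ x < β := by
  obtain ⟨_, ⟨y, rfl⟩, z, hz, hyz⟩ := h
  have hy : ∀ i, omegaVec A B₁ B₂ a b₁ b₂ γ α β μ₁ μ₂ δ₁ δ₂ y i < 0 := fun i => by
    have := congrFun hyz i
    simp only [Pi.add_apply, Pi.zero_apply] at this
    linarith [hz i]
  have hobj : homQuad A a γ y < 0 := hy 0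
  obtain ⟨hβ₁₁, hβ₂₁⟩ := max_lt_iff.1 (hy 1)
  obtain ⟨hβ₁₂, hβ₂₂⟩ := max_lt_iff.1 (hy 2)
  obtain ⟨hα₁₁, hα₂₁⟩ := lt_min_iff.1 (neg_lt_zero.1 (hy 3))
  obtain ⟨hα₁₂, hα₂₂⟩ := lt_min_iff.1 (neg_lt_zero.1 (hy 4))
  -- at `y.2 = 0` the forms with `κ = α` and `κ = β` coincide
  have hy₂ : y.2 ≠ 0 := fun hy₂ => by
    have : constraintForm B₁ B₂ b₁ b₂ μ₁ δ₁ β y = constraintForm B₁ B₂ b₁ b₂ μ₁ δ₁ α y := by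
      simp only [constraintForm, homQuad_apply, hy₂]
      ring
    linarith
  have hpos : ∀ Q : QuadraticForm ℝ ((Fin n → ℝ) × ℝ), 0 < Q y → 0 < Q (y.2⁻¹ • y.1, 1) :=
    fun Q hQ => pos_of_mul_pos_right (Q.map_eq_snd_sq_mul_map_mk_one hy₂ ▸ hQ) (sq_nonneg _)
  have hneg : ∀ Q : QuadraticForm ℝ ((Fin n → ℝ) × ℝ), Q y < 0 → Q (y.2⁻¹ • y.1, 1) < 0 :=
    fun Q hQ => by simpa using hpos (-Q) (by simpa using hQ)
  refine ⟨y.2⁻¹ • y.1, ?_, fun μ hμ δ hδ => ⟨?_, ?_⟩⟩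
  · simpa only [homQuad_mk_one, objective] using hneg _ hobj
  · have := hpos _ <| (lt_min (lt_min hα₁₁ hα₁₂) (lt_min hα₂₁ hα₂₂)).trans_le <|
      min_le_constraintForm hμ hδ α y
    rw [constraintForm_mk_one] at this
    linarith
  · have := hneg _ <| (constraintForm_le_max hμ hδ β y).trans_lt <|
      max_lt (max_lt hβ₁₁ hβ₁₂) (max_lt hβ₂₁ hβ₂₂)
    rw [constraintForm_mk_one] at this
    linarith

theorem lagrangian_apply (w : Fin 5 → ℝ) (μb μa : ℝ) (y : (Fin n → ℝ) × ℝ) :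
    lagrangian A B₁ B₂ a b₁ b₂ γ α β δ₁ δ₂ w μb μa y =
      w 0 * homQuad A a γ y + w 1 * constraintForm B₁ B₂ b₁ b₂ μb δ₁ β y +
        w 2 * constraintForm B₁ B₂ b₁ b₂ μb δ₂ β y - w 3 * constraintForm B₁ B₂ b₁ b₂ μa δ₁ α y -
        w 4 * constraintForm B₁ B₂ b₁ b₂ μa δ₂ α y := by
  simp [lagrangian]

theorem lagrangian_add_sub (w : Fin 5 → ℝ) (μb μa θ : ℝ) (y : (Fin n → ℝ) × ℝ) :
    lagrangian A B₁ B₂ a b₁ b₂ γ α β δ₁ δ₂ w (μb + θ) (μa - θ) y =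
      lagrangian A B₁ B₂ a b₁ b₂ γ α β δ₁ δ₂ w μb μa y +
        θ * (w 1 + w 2 + w 3 + w 4) * homQuad B₂ 0 0 y := by
  have h := constraintForm_apply_sub (B₁ := B₁) (B₂ := B₂) (b₁ := b₁) (b₂ := b₂)
  rw [lagrangian_apply, lagrangian_apply]
  linear_combination w 1 * h μb (μb + θ) δ₁ β y + w 2 * h μb (μb + θ) δ₂ β y -
    w 3 * h μa (μa - θ) δ₁ α y - w 4 * h μa (μa - θ) δ₂ α y

theorem dotProduct_omegaVec_of_nonpos (hμ : μ₁ ≤ μ₂) (w : Fin 5 → ℝ) {y : (Fin n → ℝ) × ℝ}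
    (hy : homQuad B₂ 0 0 y ≤ 0) :
    w ⬝ᵥ omegaVec A B₁ B₂ a b₁ b₂ γ α β μ₁ μ₂ δ₁ δ₂ y =
      lagrangian A B₁ B₂ a b₁ b₂ γ α β δ₁ δ₂ w μ₁ μ₂ y := by
  have h δ κ : constraintForm B₁ B₂ b₁ b₂ μ₂ δ κ y ≤ constraintForm B₁ B₂ b₁ b₂ μ₁ δ κ y := by
    nlinarith [constraintForm_apply_sub (B₁ := B₁) (B₂ := B₂) (b₁ := b₁) (b₂ := b₂) μ₁ μ₂ δ κ y]
  simp only [omegaVec, dotProduct, Fin.sum_univ_five, lagrangian_apply, max_eq_left (h _ _),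
    min_eq_right (h _ _), cons_val_zero, cons_val_one, cons_val, mul_neg]
  ring

theorem dotProduct_omegaVec_of_nonneg (hμ : μ₁ ≤ μ₂) (w : Fin 5 → ℝ) {y : (Fin n → ℝ) × ℝ}
    (hy : 0 ≤ homQuad B₂ 0 0 y) :
    w ⬝ᵥ omegaVec A B₁ B₂ a b₁ b₂ γ α β μ₁ μ₂ δ₁ δ₂ y =
      lagrangian A B₁ B₂ a b₁ b₂ γ α β δ₁ δ₂ w μ₂ μ₁ y := by
  have h δ κ : constraintForm B₁ B₂ b₁ b₂ μ₁ δ κ y ≤ constraintForm B₁ B₂ b₁ b₂ μ₂ δ κ y := by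
    nlinarith [constraintForm_apply_sub (B₁ := B₁) (B₂ := B₂) (b₁ := b₁) (b₂ := b₂) μ₁ μ₂ δ κ y]
  simp only [omegaVec, dotProduct, Fin.sum_univ_five, lagrangian_apply, max_eq_right (h _ _),
    min_eq_left (h _ _), cons_val_zero, cons_val_one, cons_val, mul_neg]
  ring

theorem constraint_eq_add_mul (μ δ : ℝ) (x : Fin n → ℝ) :
    constraint B₁ B₂ b₁ b₂ μ δ x = constraint B₁ B₂ b₁ b₂ μ 0 x + δ * (b₂ ⬝ᵥ x) := by
  simp only [constraint, add_dotProduct, smul_dotProduct, smul_eq_mul, zero_smul, add_zero]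
  ring

theorem lagrangian_mk_one (w : Fin 5 → ℝ) (μb μa : ℝ) {δb δa : ℝ}
    (hb : w 1 * δ₁ + w 2 * δ₂ = (w 1 + w 2) * δb) (ha : w 3 * δ₁ + w 4 * δ₂ = (w 3 + w 4) * δa)
    (x : Fin n → ℝ) :
    lagrangian A B₁ B₂ a b₁ b₂ γ α β δ₁ δ₂ w μb μa (x, 1) =
      w 0 * objective A a γ x + (w 1 + w 2) * (constraint B₁ B₂ b₁ b₂ μb δb x - β) +
        (w 3 + w 4) * (α - constraint B₁ B₂ b₁ b₂ μa δa x) := by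
  have h := constraint_eq_add_mul (B₁ := B₁) (B₂ := B₂) (b₁ := b₁) (b₂ := b₂)
  rw [lagrangian_apply, homQuad_mk_one, constraintForm_mk_one, constraintForm_mk_one,
    constraintForm_mk_one, constraintForm_mk_one, h μb δ₁, h μb δ₂, h μa δ₁, h μa δ₂, h μb δb,
    h μa δa, objective]
  linear_combination (b₂ ⬝ᵥ x) * hb - (b₂ ⬝ᵥ x) * ha

theorem exists_nonneg_lagrangian (hμ : μ₁ ≤ μ₂)
    (hconv : Convex ℝ (OmegaW n A B₁ B₂ a b₁ b₂ γ α β μ₁ μ₂ δ₁ δ₂))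
    (hsol : ¬ ∃ x, objective A a γ x < 0 ∧ ∀ μ ∈ Icc μ₁ μ₂, ∀ δ ∈ Icc δ₁ δ₂,
      α < constraint B₁ B₂ b₁ b₂ μ δ x ∧ constraint B₁ B₂ b₁ b₂ μ δ x < β) :
    ∃ w : Fin 5 → ℝ, (∀ i, 0 ≤ w i) ∧ w ≠ 0 ∧ ∃ θ ∈ Icc 0 (μ₂ - μ₁),
      ∀ y, 0 ≤ lagrangian A B₁ B₂ a b₁ b₂ γ α β δ₁ δ₂ w (μ₁ + θ) (μ₂ - θ) y := by
  rw [omegaW_eq hμ] at hconv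
  obtain ⟨w, hw0, hw, hwv⟩ := exists_nonneg_ne_zero_dotProduct_nonneg
    (omegaVec_zero ▸ mem_range_self 0) hconv fun h => hsol (exists_robust_solution_of_zero_mem h)
  have hW : 0 ≤ w 1 + w 2 + w 3 + w 4 := by linarith [hw0 1, hw0 2, hw0 3, hw0 4]
  obtain ⟨t, ⟨ht0, ht1⟩, ht⟩ := QuadraticMap.exists_mem_Icc_forall_nonneg_add_mul_mul
    (lagrangian A B₁ B₂ a b₁ b₂ γ α β δ₁ δ₂ w μ₁ μ₂) (homQuad B₂ 0 0)
    (mul_nonneg (sub_nonneg.2 hμ) hW)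
    (fun y hy => by
      rw [← dotProduct_omegaVec_of_nonpos hμ w hy]
      exact hwv _ ⟨y, rfl⟩)
    (fun y hy => by
      rw [← lagrangian_add_sub, add_sub_cancel, sub_sub_cancel,
        ← dotProduct_omegaVec_of_nonneg hμ w hy]
      exact hwv _ ⟨y, rfl⟩)
  refine ⟨w, hw0, hw, t * (μ₂ - μ₁), ⟨by nlinarith, by nlinarith⟩, fun y => ?_⟩
  rw [lagrangian_add_sub]
  linarith [ht y]

theorem exists_certificate (hμ : μ₁ ≤ μ₂) (hδ : δ₁ ≤ δ₂)
    (hconv : Convex ℝ (OmegaW n A B₁ B₂ a b₁ b₂ γ α β μ₁ μ₂ δ₁ δ₂))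
    (hsol : ¬ ∃ x, objective A a γ x < 0 ∧ ∀ μ ∈ Icc μ₁ μ₂, ∀ δ ∈ Icc δ₁ δ₂,
      α < constraint B₁ B₂ b₁ b₂ μ δ x ∧ constraint B₁ B₂ b₁ b₂ μ δ x < β) :
    ∃ lam : Fin 3 → ℝ, (∀ i, 0 ≤ lam i) ∧ lam ≠ 0 ∧
      ∃ μa ∈ Icc μ₁ μ₂, ∃ μb ∈ Icc μ₁ μ₂, ∃ δa ∈ Icc δ₁ δ₂, ∃ δb ∈ Icc δ₁ δ₂,
        μa + μb = μ₁ + μ₂ ∧ ∀ x,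
          lam 0 * objective A a γ x + lam 1 * (constraint B₁ B₂ b₁ b₂ μb δb x - β) +
            lam 2 * (α - constraint B₁ B₂ b₁ b₂ μa δa x) ≥ 0 := by
  obtain ⟨w, hw0, hw, θ, ⟨hθ0, hθ⟩, hL⟩ := exists_nonneg_lagrangian hμ hconv hsol
  obtain ⟨δb, hδb, hb⟩ := exists_mem_Icc_mul_add_mul_eq (hw0 1) (hw0 2) hδ
  obtain ⟨δa, hδa, ha⟩ := exists_mem_Icc_mul_add_mul_eq (hw0 3) (hw0 4) hδ
  refine ⟨![w 0, w 1 + w 2, w 3 + w 4], ?_, ?_, μ₂ - θ, ⟨by linarith, by linarith⟩,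
    μ₁ + θ, ⟨by linarith, by linarith⟩, δa, hδa, δb, hδb, by ring, fun x => ?_⟩
  · intro i
    fin_cases i <;> simp [hw0 0, add_nonneg (hw0 1) (hw0 2), add_nonneg (hw0 3) (hw0 4)]
  · intro h
    have h₀ := congrFun h 0
    have h₁ := congrFun h 1
    have h₂ := congrFun h 2
    simp only [cons_val_zero, cons_val_one, cons_val_two, tail_cons, head_cons,
      Pi.zero_apply] at h₀ h₁ h₂
    have hsum : ∑ i, w i = 0 := by
      rw [Fin.sum_univ_five]
      linarith
    exact hw (funext fun i =>
      (Finset.sum_eq_zero_iff_of_nonneg fun j _ => hw0 j).1 hsum i (Finset.mem_univ i))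
  · simp only [cons_val_zero, cons_val_one, cons_val_two, tail_cons, head_cons]
    rw [ge_iff_le, ← lagrangian_mk_one w _ _ hb ha]
    exact hL (x, 1)

end RobustAlternative

theorem robust_alternative_general (n : ℕ) (A B₁ B₂ : Matrix (Fin n) (Fin n) ℝ)
    (a b₁ b₂ : Fin n → ℝ) (γ α β μ₁ μ₂ δ₁ δ₂ : ℝ)
    (hμ : μ₁ ≤ μ₂) (hδ : δ₁ ≤ δ₂)
    (hconv : Convex ℝ (OmegaW n A B₁ B₂ a b₁ b₂ γ α β μ₁ μ₂ δ₁ δ₂)) :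
    Xor'
      (∃ x : Fin n → ℝ,
        (1 / 2) * (x ⬝ᵥ (A *ᵥ x)) + a ⬝ᵥ x + γ < 0 ∧
        ∀ μ ∈ Icc μ₁ μ₂, ∀ δ ∈ Icc δ₁ δ₂,
          α < (1 / 2) * (x ⬝ᵥ ((B₁ + μ • B₂) *ᵥ x)) + (b₁ + δ • b₂) ⬝ᵥ x ∧
          (1 / 2) * (x ⬝ᵥ ((B₁ + μ • B₂) *ᵥ x)) + (b₁ + δ • b₂) ⬝ᵥ x < β)
      (∃ lam : Fin 3 → ℝ, (∀ i, 0 ≤ lam i) ∧ lam ≠ 0 ∧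
        ∃ μa ∈ Icc μ₁ μ₂, ∃ μb ∈ Icc μ₁ μ₂,
        ∃ δa ∈ Icc δ₁ δ₂, ∃ δb ∈ Icc δ₁ δ₂,
          μa + μb = μ₁ + μ₂ ∧
          ∀ x : Fin n → ℝ,
            lam 0 * ((1 / 2) * (x ⬝ᵥ (A *ᵥ x)) + a ⬝ᵥ x + γ) +
            lam 1 * ((1 / 2) * (x ⬝ᵥ ((B₁ + μb • B₂) *ᵥ x)) + (b₁ + δb • b₂) ⬝ᵥ x - β) +
            lam 2 * (α - ((1 / 2) * (x ⬝ᵥ ((B₁ + μa • B₂) *ᵥ x)) + (b₁ + δa • b₂) ⬝ᵥ x))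
              ≥ 0) := by
  refine xor_iff_not_iff'.2 ⟨RobustAlternative.exists_certificate hμ hδ hconv, ?_⟩
  rintro ⟨lam, hlam, hlam0, μa, hμa, μb, hμb, δa, hδa, δb, hδb, -, hcert⟩ ⟨x, hobj, hcon⟩
  have hneg := dotProduct_neg_of_nonneg_of_ne_zero hlam hlam0
    (t := ![_, _ - β, α - _]) fun i => by
      fin_cases i
      exacts [hobj, sub_neg.2 (hcon μb hμb δb hδb).2, sub_neg.2 (hcon μa hμa δa hδa).1]
  rw [dotProduct, Fin.sum_univ_three] at hneg
  exact not_le.2 hneg (hcert x)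

/-- Theorem 1, a robust alternative result. -/
theorem robust_alternative (n : ℕ) (A B₁ B₂ : Matrix (Fin n) (Fin n) ℝ)
    (a b₁ b₂ : Fin n → ℝ) (γ α β μ₁ μ₂ δ₁ δ₂ : ℝ)
    (hA : A.IsSymm) (hB₁ : B₁.IsSymm) (hB₂ : B₂.IsSymm)
    (hμ : μ₁ ≤ μ₂) (hδ : δ₁ ≤ δ₂) (hαβ : α < β)
    (hconv : Convex ℝ (OmegaW n A B₁ B₂ a b₁ b₂ γ α β μ₁ μ₂ δ₁ δ₂)) :
    Xor'
      (∃ x : Fin n → ℝ,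
        (1 / 2) * (x ⬝ᵥ (A *ᵥ x)) + a ⬝ᵥ x + γ < 0 ∧
        ∀ μ ∈ Icc μ₁ μ₂, ∀ δ ∈ Icc δ₁ δ₂,
          α < (1 / 2) * (x ⬝ᵥ ((B₁ + μ • B₂) *ᵥ x)) + (b₁ + δ • b₂) ⬝ᵥ x ∧
          (1 / 2) * (x ⬝ᵥ ((B₁ + μ • B₂) *ᵥ x)) + (b₁ + δ • b₂) ⬝ᵥ x < β)
      (∃ lam : Fin 3 → ℝ, (∀ i, 0 ≤ lam i) ∧ lam ≠ 0 ∧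
        ∃ μa ∈ Icc μ₁ μ₂, ∃ μb ∈ Icc μ₁ μ₂,
        ∃ δa ∈ Icc δ₁ δ₂, ∃ δb ∈ Icc δ₁ δ₂,
          μa + μb = μ₁ + μ₂ ∧
          ∀ x : Fin n → ℝ,
            lam 0 * ((1 / 2) * (x ⬝ᵥ (A *ᵥ x)) + a ⬝ᵥ x + γ) +
            lam 1 * ((1 / 2) * (x ⬝ᵥ ((B₁ + μb • B₂) *ᵥ x)) + (b₁ + δb • b₂) ⬝ᵥ x - β) +
            lam 2 * (α - ((1 / 2) * (x ⬝ᵥ ((B₁ + μa • B₂) *ᵥ x)) + (b₁ + δa • b₂) ⬝ᵥ x))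
              ≥ 0) :=
  robust_alternative_general n A B₁ B₂ a b₁ b₂ γ α β μ₁ μ₂ δ₁ δ₂ hμ hδ hconv
end

section
/- (Robust S-lemma.) Let A, B₁, B₂ be real symmetric n×n matrices, a, b₁, b₂ ∈ ℝ^n, and γ, α, β, μ₁, μ₂, δ₁, δ₂ ∈ ℝ with μ₁ ≤ μ₂, δ₁ ≤ δ₂ and α < β. Assume that the set Ω_W is convex and that there exists x₀ ∈ ℝ^n satisfying the Slater-type condition α < ½x₀ᵀ(B₁+μB₂)x₀ + (b₁+δb₂)ᵀx₀ < β for all μ ∈ [μ₁,μ₂] and all δ ∈ [δ₁,δ₂]. Then the following are equivalent: (a) for every x ∈ ℝ^n, if α ≤ ½xᵀ(B₁+μB₂)x + (b₁+δb₂)ᵀx ≤ β for all μ ∈ [μ₁,μ₂] and all δ ∈ [δ₁,δ₂], then ½xᵀAx + aᵀx + γ ≥ 0; (b) there exist λ₁, λ₂ ≥ 0, μ_α, μ_β ∈ [μ₁,μ₂] with μ_α + μ_β = μ₁ + μ₂, and δ_α, δ_β ∈ [δ₁,δ₂] such that for all x ∈ ℝ^n: ½xᵀAx + aᵀx + γ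 + λ₁(½xᵀ(B₁+μ_βB₂)x + (b₁+δ_βb₂)ᵀx − β) + λ₂(α − (½xᵀ(B₁+μ_αB₂)x + (b₁+δ_αb₂)ᵀx)) ≥ 0. -/
/-!
Homogenize with `y = (x, t)`: `½ xᵀ M x + vᵀ x + c` becomes the quadratic form
`½ xᵀ M x + t vᵀ x + c t²`, and the extrema over `μ ∈ [μ₁, μ₂]` in `Ω_W`, being extrema of affine
functions of `μ`, are taken at the endpoints. Condition (a) keeps `0` out of `Ω_W`: rescale a point
with `t ≠ 0` to `t = 1`, and at `t = 0` the `α`- and `β`-forms coincide. As `Ω_W` is convex and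
open, a functional `c ≥ 0` separates it from `0`, and the Slater point forces `c₀ > 0`. Averaging
the two `δ`-endpoints on each side gives `δ_β, δ_α`; the sign of `½ xᵀ B₂ x` decides which
`μ`-endpoints carry the extrema, so the maximum of two quadratic forms is nonnegative. Yuan's
lemma turns this into one nonnegative convex combination with weight `θ`, which is the
certificate (b) at `t = 1` with `μ_β = (1 - θ) μ₂ + θ μ₁` and `μ_α = (1 - θ) μ₁ + θ μ₂`.
The converse is weak duality.
-/

open Matrix Set Pointwise

namespace QuadraticMap

variable {V : Type*} [AddCommGroup V] [Module ℝ V]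

theorem apply_smul_add_smul (Q : QuadraticForm ℝ V) (a b : ℝ) (u w : V) :
    Q (a • u + b • w) = a ^ 2 * Q u + a * b * polar Q u w + b ^ 2 * Q w := by
  have h : polar Q (a • u) (b • w) = a * b * polar Q u w := by
    rw [polar_smul_left, polar_smul_right, smul_eq_mul, smul_eq_mul]
    ring
  rw [polar, Q.map_smul, Q.map_smul, smul_eq_mul, smul_eq_mul] at h
  linear_combination h

theorem apply_one_sub_smul_add_smul_neg (Q : QuadraticForm ℝ V) {u w : V} (hu : Q u < 0)
    (hw : Q w < 0) (huw : polar Q u w ≤ 0) {s : ℝ} (hs : s ∈ Icc (0 : ℝ) 1) :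
    Q ((1 - s) • u + s • w) < 0 := by
  obtain ⟨hs₀, hs₁⟩ := hs
  rw [apply_smul_add_smul]
  rcases eq_or_lt_of_le hs₀ with rfl | hs₀
  · simpa using hu
  · nlinarith [mul_nonneg (sq_nonneg (1 - s)) (neg_nonneg.2 hu.le),
      mul_nonneg (mul_nonneg (sub_nonneg.2 hs₁) hs₀.le) (neg_nonneg.2 huw),
      mul_pos (pow_pos hs₀ 2) (neg_pos.2 hw)]

/-- On the segment from `u` to `±w` (sign chosen to make `polar Q u w ≤ 0`), `Q` stays negative
while `D` changes sign. -/
theorem exists_neg_and_eq_zero (Q D : QuadraticForm ℝ V) {u w : V} (hu : Q u < 0) (hw : Q w < 0)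
    (hDu : D u < 0) (hDw : 0 < D w) : ∃ v, Q v < 0 ∧ D v = 0 := by
  wlog huw : polar Q u w ≤ 0 generalizing w
  · refine this (w := -w) (by rwa [QuadraticMap.map_neg]) (by rwa [QuadraticMap.map_neg]) ?_
    rw [polar_neg_right]
    linarith
  have hcont : ContinuousOn (fun s : ℝ => D ((1 - s) • u + s • w)) (Icc 0 1) := by
    simp only [apply_smul_add_smul]
    fun_prop
  obtain ⟨s, hs, hDs⟩ := intermediate_value_Icc zero_le_one hcont
    ⟨by simpa using hDu.le, by simpa using hDw.le⟩
  exact ⟨_, apply_one_sub_smul_add_smul_neg Q hu hw huw hs, hDs⟩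

/-- Yuan's lemma. Otherwise the open sets of `θ` at which `(1 - θ) Q₀ + θ Q₁` is negative at some
`v` with `Q₀ v < Q₁ v`, resp. `Q₀ v > Q₁ v`, cover `[0, 1]` and meet at some `θ`, contradicting
`exists_neg_and_eq_zero` for `Q = (1 - θ) Q₀ + θ Q₁` and `D = Q₀ - Q₁`. -/
theorem exists_forall_nonneg_of_max_nonneg (Q₀ Q₁ : QuadraticForm ℝ V)
    (h : ∀ v, 0 ≤ max (Q₀ v) (Q₁ v)) :
    ∃ θ ∈ Icc (0 : ℝ) 1, ∀ v, 0 ≤ (1 - θ) * Q₀ v + θ * Q₁ v := by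
  by_contra! H
  let U := {θ : ℝ | ∃ v, Q₀ v < Q₁ v ∧ (1 - θ) * Q₀ v + θ * Q₁ v < 0}
  let W := {θ : ℝ | ∃ v, Q₁ v < Q₀ v ∧ (1 - θ) * Q₀ v + θ * Q₁ v < 0}
  have hopen : ∀ p : V → Prop, IsOpen {θ : ℝ | ∃ v, p v ∧ (1 - θ) * Q₀ v + θ * Q₁ v < 0} := by
    intro p
    simp only [ofPred_exists, ofPred_and]
    exact isOpen_iUnion fun v => isOpen_const.inter (isOpen_lt (by fun_prop) continuous_const)
  have hcover : Icc (0 : ℝ) 1 ⊆ U ∪ W := by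
    intro θ hθ
    obtain ⟨v, hv⟩ := H θ hθ
    rcases lt_trichotomy (Q₀ v) (Q₁ v) with hlt | heq | hgt
    · exact Or.inl ⟨v, hlt, hv⟩
    · have := h v
      rw [heq, max_self] at this
      rw [heq] at hv
      linarith
    · exact Or.inr ⟨v, hgt, hv⟩
  have hU : (Icc (0 : ℝ) 1 ∩ U).Nonempty := by
    obtain ⟨v, hv⟩ := H 0 (by simp)
    have hv₀ : Q₀ v < 0 := by simpa using hv
    exact ⟨0, by simp, v, hv₀.trans_le ((le_max_iff.1 (h v)).resolve_left hv₀.not_ge), hv⟩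
  have hW : (Icc (0 : ℝ) 1 ∩ W).Nonempty := by
    obtain ⟨v, hv⟩ := H 1 (by simp)
    have hv₁ : Q₁ v < 0 := by simpa using hv
    exact ⟨1, by simp, v, hv₁.trans_le ((le_max_iff.1 (h v)).resolve_right hv₁.not_ge), hv⟩
  obtain ⟨θ, -, ⟨u, hDu, hu⟩, ⟨w, hDw, hw⟩⟩ :=
    isPreconnected_Icc U W (hopen _) (hopen _) hcover hU hW
  obtain ⟨v, hv, hDv⟩ := exists_neg_and_eq_zero ((1 - θ) • Q₀ + θ • Q₁) (Q₀ - Q₁)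
    (u := u) (w := w) (by simpa using hu) (by simpa using hw) (by simpa using hDu)
    (by simpa using hDw)
  have heq : Q₀ v = Q₁ v := sub_eq_zero.1 (by simpa using hDv)
  have := h v
  simp only [_root_.add_apply, _root_.smul_apply, smul_eq_mul, heq] at hv
  rw [heq, max_self] at this
  linarith

end QuadraticMap

theorem isOpen_setOf_forall_pos (ι : Type*) [Finite ι] : IsOpen {z : ι → ℝ | ∀ i, 0 < z i} := by
  rw [ofPred_forall]
  exact isOpen_iInter_of_finite fun i => isOpen_lt continuous_const (continuous_apply i)

open Filter Topology in
theorem exists_nonneg_dotProduct_nonneg {ι : Type*} [Fintype ι] {C : Set (ι → ℝ)}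
    (hconv : Convex ℝ (C + {z | ∀ i, 0 < z i})) (h0 : (0 : ι → ℝ) ∉ C + {z | ∀ i, 0 < z i})
    (hC : (0 : ι → ℝ) ∈ C) :
    ∃ c : ι → ℝ, 0 ≤ c ∧ c ≠ 0 ∧ ∀ z ∈ C, 0 ≤ c ⬝ᵥ z := by
  classical
  obtain ⟨f, hf⟩ := geometric_hahn_banach_point_open hconv
    ((isOpen_setOf_forall_pos ι).add_left) h0
  set c := (dotProductEquiv ℝ ι).symm f.toLinearMap
  have hfc : ∀ z, f z = c ⬝ᵥ z := fun z => by
    rw [← dotProductEquiv_apply_apply, LinearEquiv.apply_symm_apply]; rfl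
  have hpos : ∀ z ∈ C + {z | ∀ i, 0 < z i}, 0 < c ⬝ᵥ z := fun z hz => by
    simpa [hfc] using hf z hz
  have hclosure : ∀ z ∈ C, ∀ w : ι → ℝ, 0 ≤ w → 0 ≤ c ⬝ᵥ (z + w) := by
    intro z hz w hw
    have hmem : z + w ∈ closure (C + {z | ∀ i, 0 < z i}) := by
      refine mem_closure_of_tendsto (f := fun ε : ℝ => z + (w + ε • 1)) (b := 𝓝[>] 0) ?_ ?_
      · exact ((by fun_prop : Continuous fun ε : ℝ => z + (w + ε • 1)).tendsto' 0 _
          (by simp)).mono_left nhdsWithin_le_nhds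
      · filter_upwards [self_mem_nhdsWithin] with ε hε
        exact add_mem_add hz fun i => by simpa using add_pos_of_nonneg_of_pos (hw i) hε
    rw [← hfc]
    exact closure_minimal (fun z hz => (hfc z ▸ hpos z hz).le)
      (isClosed_le continuous_const f.continuous) hmem
  refine ⟨c, fun i => ?_, fun hc => ?_, fun z hz => by simpa using hclosure z hz 0 le_rfl⟩
  · simpa using hclosure 0 hC (Pi.single i 1) (Pi.single_nonneg.2 zero_le_one)
  · have := hpos 1 ⟨0, hC, 1, fun _ => one_pos, zero_add 1⟩
    simp [hc] at this

theorem exists_mem_Icc_mul_add_mul_eq_s3 {w₁ w₂ δ₁ δ₂ : ℝ} (hw₁ : 0 ≤ w₁) (hw₂ : 0 ≤ w₂)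
    (hδ : δ₁ ≤ δ₂) : ∃ δ ∈ Icc δ₁ δ₂, w₁ * δ₁ + w₂ * δ₂ = (w₁ + w₂) * δ := by
  rcases (add_nonneg hw₁ hw₂).eq_or_lt with h | h
  · refine ⟨δ₁, left_mem_Icc.2 hδ, ?_⟩
    obtain ⟨rfl, rfl⟩ : w₁ = 0 ∧ w₂ = 0 := ⟨by linarith, by linarith⟩
    simp
  · refine ⟨(w₁ * δ₁ + w₂ * δ₂) / (w₁ + w₂), ⟨?_, ?_⟩, by field_simp⟩
    · rw [le_div_iff₀ h]; nlinarith
    · rw [div_le_iff₀ h]; nlinarith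

theorem dotProduct_neg_of_nonneg {ι : Type*} [Fintype ι] {c z : ι → ℝ} (hc : 0 ≤ c) (hc₀ : c ≠ 0)
    (hz : ∀ i, c i ≠ 0 → z i < 0) : c ⬝ᵥ z < 0 := by
  obtain ⟨j, hj⟩ := Function.ne_iff.1 hc₀
  refine Finset.sum_neg' (fun i _ => ?_) ⟨j, Finset.mem_univ j, mul_neg_of_pos_of_neg
    ((hc j).lt_of_ne' hj) (hz j hj)⟩
  by_cases hi : c i = 0
  · simp [hi]
  · exact mul_nonpos_of_nonneg_of_nonpos (hc i) (hz i hi).le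

theorem image_Icc_of_affine {f : ℝ → ℝ} {C D μ₁ μ₂ : ℝ} (hf : ∀ μ, f μ = C + μ * D)
    (hμ : μ₁ ≤ μ₂) : f '' Icc μ₁ μ₂ = uIcc (f μ₁) (f μ₂) := by
  rw [funext hf, ← uIcc_of_le hμ, show (fun μ => C + μ * D) = (C + ·) ∘ (· * D) from rfl,
    image_comp, image_mul_const_uIcc, image_const_add_uIcc]
  rfl

theorem csSup_uIcc (a b : ℝ) : sSup (uIcc a b) = max a b := csSup_Icc inf_le_sup

theorem csInf_uIcc (a b : ℝ) : sInf (uIcc a b) = min a b := csInf_Icc inf_le_sup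

theorem mem_Icc_of_affine {C D μ₁ μ₂ μ α β : ℝ} (h₁ : C + μ₁ * D ∈ Icc α β)
    (h₂ : C + μ₂ * D ∈ Icc α β) (hμ : μ ∈ Icc μ₁ μ₂) : C + μ * D ∈ Icc α β :=
  uIcc_subset_Icc h₁ h₂ <| (image_Icc_of_affine (fun _ => rfl) (hμ.1.trans hμ.2)).subset
    (mem_image_of_mem _ hμ)

theorem mem_Icc_of_corners {C p q μ₁ μ₂ δ₁ δ₂ μ δ α β : ℝ}
    (h : ∀ μ' ∈ ({μ₁, μ₂} : Set ℝ), ∀ δ' ∈ ({δ₁, δ₂} : Set ℝ), C + μ' * p + δ' * q ∈ Icc α β)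
    (hμ : μ ∈ Icc μ₁ μ₂) (hδ : δ ∈ Icc δ₁ δ₂) : C + μ * p + δ * q ∈ Icc α β := by
  have hside : ∀ δ' ∈ ({δ₁, δ₂} : Set ℝ), C + μ * p + δ' * q ∈ Icc α β := fun δ' hδ' => by
    have h₁ := h μ₁ (by simp) δ' hδ'
    have h₂ := h μ₂ (by simp) δ' hδ'
    rw [add_right_comm] at h₁ h₂ ⊢
    exact mem_Icc_of_affine h₁ h₂ hμ
  exact mem_Icc_of_affine (hside δ₁ (by simp)) (hside δ₂ (by simp)) hδ

noncomputable def quadFn {n : ℕ} (M : Matrix (Fin n) (Fin n) ℝ) (v x : Fin n → ℝ) : ℝ :=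
  (1 / 2) * (x ⬝ᵥ (M *ᵥ x)) + v ⬝ᵥ x

noncomputable def homogenizedForm {n : ℕ} (M : Matrix (Fin n) (Fin n) ℝ) (v : Fin n → ℝ) (c : ℝ) :
    QuadraticForm ℝ ((Fin n → ℝ) × ℝ) :=
  LinearMap.BilinMap.toQuadraticMap <| LinearMap.mk₂ ℝ (fun y z : (Fin n → ℝ) × ℝ =>
      (1 / 2) * (y.1 ⬝ᵥ (M *ᵥ z.1)) + y.2 * (v ⬝ᵥ z.1) + c * (y.2 * z.2))
    (fun _ _ _ => by simp only [Prod.fst_add, Prod.snd_add, add_dotProduct]; ring)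
    (fun _ _ _ => by simp only [Prod.smul_fst, Prod.smul_snd, smul_dotProduct, smul_eq_mul]; ring)
    (fun _ _ _ => by simp only [Prod.fst_add, Prod.snd_add, mulVec_add, dotProduct_add]; ring)
    (fun _ _ _ => by
      simp only [Prod.smul_fst, Prod.smul_snd, mulVec_smul, dotProduct_smul, smul_eq_mul]; ring)

theorem homogenizedForm_apply {n : ℕ} (M : Matrix (Fin n) (Fin n) ℝ) (v : Fin n → ℝ) (c : ℝ)
    (y : (Fin n → ℝ) × ℝ) :
    homogenizedForm M v c y = (1 / 2) * (y.1 ⬝ᵥ (M *ᵥ y.1)) + y.2 * (v ⬝ᵥ y.1) + c * y.2 ^ 2 := by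
  simp only [homogenizedForm, LinearMap.BilinMap.toQuadraticMap_apply, LinearMap.mk₂_apply, sq]

theorem homogenizedForm_apply_one {n : ℕ} (M : Matrix (Fin n) (Fin n) ℝ) (v : Fin n → ℝ) (c : ℝ)
    (x : Fin n → ℝ) : homogenizedForm M v c (x, 1) = quadFn M v x + c := by
  simp [homogenizedForm_apply, quadFn]

theorem quadFn_add_smul {n : ℕ} (B₁ B₂ : Matrix (Fin n) (Fin n) ℝ) (b₁ b₂ x : Fin n → ℝ)
    (μ δ : ℝ) : quadFn (B₁ + μ • B₂) (b₁ + δ • b₂) x =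
      quadFn B₁ b₁ x + μ * ((1 / 2) * (x ⬝ᵥ (B₂ *ᵥ x))) + δ * (b₂ ⬝ᵥ x) := by
  simp only [quadFn, add_mulVec, smul_mulVec, dotProduct_add, dotProduct_smul, add_dotProduct,
    smul_dotProduct, smul_eq_mul]
  ring

section RobustSLemma

variable {n : ℕ} (A B₁ B₂ : Matrix (Fin n) (Fin n) ℝ) (a b₁ b₂ : Fin n → ℝ)
  (γ α β μ₁ μ₂ δ₁ δ₂ : ℝ)

/-- `½ yᵀ (W(δ, c) + μ W₂) y` in the notation of `Ω_W`. -/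
noncomputable def constraintForm (μ δ c : ℝ) : QuadraticForm ℝ ((Fin n → ℝ) × ℝ) :=
  homogenizedForm (B₁ + μ • B₂) (b₁ + δ • b₂) (-c)

def RobustFeasible (x : Fin n → ℝ) : Prop :=
  ∀ μ ∈ Icc μ₁ μ₂, ∀ δ ∈ Icc δ₁ δ₂, quadFn (B₁ + μ • B₂) (b₁ + δ • b₂) x ∈ Icc α β

def HasRobustCertificate : Prop :=
  ∃ lam₁ lam₂ : ℝ, 0 ≤ lam₁ ∧ 0 ≤ lam₂ ∧
    ∃ μa ∈ Icc μ₁ μ₂, ∃ μb ∈ Icc μ₁ μ₂, ∃ δa ∈ Icc δ₁ δ₂, ∃ δb ∈ Icc δ₁ δ₂,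
      μa + μb = μ₁ + μ₂ ∧ ∀ x : Fin n → ℝ,
        0 ≤ quadFn A a x + γ + lam₁ * (quadFn (B₁ + μb • B₂) (b₁ + δb • b₂) x - β) +
          lam₂ * (α - quadFn (B₁ + μa • B₂) (b₁ + δa • b₂) x)

noncomputable def omegaMap (y : (Fin n → ℝ) × ℝ) : Fin 5 → ℝ :=
  ![homogenizedForm A a γ y,
    max (constraintForm B₁ B₂ b₁ b₂ μ₁ δ₁ β y) (constraintForm B₁ B₂ b₁ b₂ μ₂ δ₁ β y),
    max (constraintForm B₁ B₂ b₁ b₂ μ₁ δ₂ β y) (constraintForm B₁ B₂ b₁ b₂ μ₂ δ₂ β y),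
    -min (constraintForm B₁ B₂ b₁ b₂ μ₁ δ₁ α y) (constraintForm B₁ B₂ b₁ b₂ μ₂ δ₁ α y),
    -min (constraintForm B₁ B₂ b₁ b₂ μ₁ δ₂ α y) (constraintForm B₁ B₂ b₁ b₂ μ₂ δ₂ α y)]

noncomputable def lagrangianForm (lam₁ lam₂ μb δb μa δa : ℝ) :
    QuadraticForm ℝ ((Fin n → ℝ) × ℝ) :=
  homogenizedForm A a γ + lam₁ • constraintForm B₁ B₂ b₁ b₂ μb δb β -
    lam₂ • constraintForm B₁ B₂ b₁ b₂ μa δa α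

variable {A B₁ B₂ a b₁ b₂ γ α β μ₁ μ₂ δ₁ δ₂}

theorem constraintForm_apply (μ δ c : ℝ) (y : (Fin n → ℝ) × ℝ) :
    constraintForm B₁ B₂ b₁ b₂ μ δ c y = (1 / 2) * (y.1 ⬝ᵥ ((B₁ + μ • B₂) *ᵥ y.1)) +
      y.2 * ((b₁ + δ • b₂) ⬝ᵥ y.1) - c * y.2 ^ 2 := by
  rw [constraintForm, homogenizedForm_apply, neg_mul, sub_eq_add_neg]

theorem constraintForm_apply_affine (μ δ c : ℝ) (y : (Fin n → ℝ) × ℝ) :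
    constraintForm B₁ B₂ b₁ b₂ μ δ c y = homogenizedForm B₁ b₁ (-c) y +
      μ * ((1 / 2) * (y.1 ⬝ᵥ (B₂ *ᵥ y.1))) + δ * (y.2 * (b₂ ⬝ᵥ y.1)) := by
  simp only [constraintForm, homogenizedForm_apply, add_mulVec, smul_mulVec, dotProduct_add,
    dotProduct_smul, add_dotProduct, smul_dotProduct, smul_eq_mul]
  ring

theorem constraintForm_apply_one (μ δ c : ℝ) (x : Fin n → ℝ) :
    constraintForm B₁ B₂ b₁ b₂ μ δ c (x, 1) = quadFn (B₁ + μ • B₂) (b₁ + δ • b₂) x - c := by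
  rw [constraintForm, homogenizedForm_apply_one, sub_eq_add_neg]

theorem mul_constraintForm_add_mul {w₁ w₂ μ μ' μ'' δ δ' δ'' : ℝ} (c : ℝ)
    (hμ : w₁ * μ + w₂ * μ' = (w₁ + w₂) * μ'') (hδ : w₁ * δ + w₂ * δ' = (w₁ + w₂) * δ'')
    (y : (Fin n → ℝ) × ℝ) :
    w₁ * constraintForm B₁ B₂ b₁ b₂ μ δ c y + w₂ * constraintForm B₁ B₂ b₁ b₂ μ' δ' c y =
      (w₁ + w₂) * constraintForm B₁ B₂ b₁ b₂ μ'' δ'' c y := by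
  simp only [constraintForm_apply_affine]
  linear_combination ((1 / 2) * (y.1 ⬝ᵥ (B₂ *ᵥ y.1))) * hμ + (y.2 * (b₂ ⬝ᵥ y.1)) * hδ

theorem csSup_image_constraintForm (hμ : μ₁ ≤ μ₂) (δ c : ℝ) (y : (Fin n → ℝ) × ℝ) :
    sSup ((fun μ => constraintForm B₁ B₂ b₁ b₂ μ δ c y) '' Icc μ₁ μ₂) =
      max (constraintForm B₁ B₂ b₁ b₂ μ₁ δ c y) (constraintForm B₁ B₂ b₁ b₂ μ₂ δ c y) := by
  rw [image_Icc_of_affine (fun μ => by rw [constraintForm_apply_affine, add_right_comm]) hμ,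
    csSup_uIcc]

theorem csInf_image_constraintForm (hμ : μ₁ ≤ μ₂) (δ c : ℝ) (y : (Fin n → ℝ) × ℝ) :
    sInf ((fun μ => constraintForm B₁ B₂ b₁ b₂ μ δ c y) '' Icc μ₁ μ₂) =
      min (constraintForm B₁ B₂ b₁ b₂ μ₁ δ c y) (constraintForm B₁ B₂ b₁ b₂ μ₂ δ c y) := by
  rw [image_Icc_of_affine (fun μ => by rw [constraintForm_apply_affine, add_right_comm]) hμ,
    csInf_uIcc]

theorem omegaW_eq (hμ : μ₁ ≤ μ₂) :
    OmegaW n A B₁ B₂ a b₁ b₂ γ α β μ₁ μ₂ δ₁ δ₂ =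
      range (omegaMap A B₁ B₂ a b₁ b₂ γ α β μ₁ μ₂ δ₁ δ₂) + {z | ∀ i, 0 < z i} := by
  simp only [OmegaW, ← homogenizedForm_apply, ← constraintForm_apply, csSup_image_constraintForm hμ,
    csInf_image_constraintForm hμ]
  rfl

theorem robustFeasible_of_corners {x : Fin n → ℝ}
    (h : ∀ μ ∈ ({μ₁, μ₂} : Set ℝ), ∀ δ ∈ ({δ₁, δ₂} : Set ℝ),
      quadFn (B₁ + μ • B₂) (b₁ + δ • b₂) x ∈ Icc α β) :
    RobustFeasible B₁ B₂ b₁ b₂ α β μ₁ μ₂ δ₁ δ₂ x := fun μ hμ δ hδ => by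
  simp only [quadFn_add_smul] at h ⊢
  exact mem_Icc_of_corners h hμ hδ

theorem zero_notMem_omegaMap_add
    (hfeas : ∀ x, RobustFeasible B₁ B₂ b₁ b₂ α β μ₁ μ₂ δ₁ δ₂ x → 0 ≤ quadFn A a x + γ) :
    (0 : Fin 5 → ℝ) ∉ range (omegaMap A B₁ B₂ a b₁ b₂ γ α β μ₁ μ₂ δ₁ δ₂) + {z | ∀ i, 0 < z i} := by
  intro h
  obtain ⟨_, ⟨⟨x, t⟩, rfl⟩, w, hw, hsum⟩ := mem_add.1 h
  have hω : ∀ i, omegaMap A B₁ B₂ a b₁ b₂ γ α β μ₁ μ₂ δ₁ δ₂ (x, t) i < 0 := fun i => by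
    have := congrFun hsum i
    simp only [Pi.add_apply, Pi.zero_apply] at this
    linarith [hw i]
  have h₀ := hω 0; have h₁ := hω 1; have h₂ := hω 2; have h₃ := hω 3; have h₄ := hω 4
  simp only [omegaMap, Fin.isValue, cons_val_zero, cons_val_one, cons_val, max_lt_iff,
    Left.neg_neg_iff, lt_min_iff] at h₀ h₁ h₂ h₃ h₄
  rcases eq_or_ne t 0 with rfl | ht
  · have : constraintForm B₁ B₂ b₁ b₂ μ₁ δ₁ β (x, 0) =
        constraintForm B₁ B₂ b₁ b₂ μ₁ δ₁ α (x, 0) := by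
      simp [constraintForm_apply]
    linarith [h₁.1, h₃.1]
  have hscale : ∀ Q : QuadraticForm ℝ ((Fin n → ℝ) × ℝ), Q (x, t) = t ^ 2 * Q (t⁻¹ • x, 1) := by
    intro Q
    rw [sq, ← smul_eq_mul, ← Q.map_smul, Prod.smul_mk, smul_inv_smul₀ ht, smul_eq_mul, mul_one]
  have ht2 : 0 < t ^ 2 := by positivity
  have hpos (r : ℝ) : 0 < t ^ 2 * r ↔ 0 < r := mul_pos_iff_of_pos_left ht2
  have hneg (r : ℝ) : t ^ 2 * r < 0 ↔ r < 0 := by rw [← neg_pos, ← mul_neg, hpos, neg_pos]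
  simp only [hscale, hpos, hneg, constraintForm_apply_one, homogenizedForm_apply_one, sub_neg,
    sub_pos] at h₀ h₁ h₂ h₃ h₄
  refine (hfeas (t⁻¹ • x) (robustFeasible_of_corners ?_)).not_gt h₀
  simp only [mem_insert_iff, mem_singleton_iff, forall_eq_or_imp, forall_eq]
  exact ⟨⟨⟨h₃.1.le, h₁.1.le⟩, h₄.1.le, h₂.1.le⟩, ⟨h₃.2.le, h₁.2.le⟩, h₄.2.le, h₂.2.le⟩

theorem omegaMap_slater_neg (hμ : μ₁ ≤ μ₂) (hδ : δ₁ ≤ δ₂) {x₀ : Fin n → ℝ}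
    (hx₀ : ∀ μ ∈ Icc μ₁ μ₂, ∀ δ ∈ Icc δ₁ δ₂, quadFn (B₁ + μ • B₂) (b₁ + δ • b₂) x₀ ∈ Ioo α β)
    {i : Fin 5} (hi : i ≠ 0) : omegaMap A B₁ B₂ a b₁ b₂ γ α β μ₁ μ₂ δ₁ δ₂ (x₀, 1) i < 0 := by
  have h₁₁ := hx₀ μ₁ (left_mem_Icc.2 hμ) δ₁ (left_mem_Icc.2 hδ)
  have h₁₂ := hx₀ μ₁ (left_mem_Icc.2 hμ) δ₂ (right_mem_Icc.2 hδ)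
  have h₂₁ := hx₀ μ₂ (right_mem_Icc.2 hμ) δ₁ (left_mem_Icc.2 hδ)
  have h₂₂ := hx₀ μ₂ (right_mem_Icc.2 hμ) δ₂ (right_mem_Icc.2 hδ)
  fin_cases i
  · exact absurd rfl hi
  all_goals simp only [omegaMap, constraintForm_apply_one, Fin.mk_one, Fin.reduceFinMk,
    Fin.isValue, cons_val_one, cons_val_zero, cons_val, max_lt_iff, Left.neg_neg_iff, lt_min_iff,
    sub_neg, sub_pos]
  exacts [⟨h₁₁.2, h₂₁.2⟩, ⟨h₁₂.2, h₂₂.2⟩, ⟨h₁₁.1, h₂₁.1⟩, ⟨h₁₂.1, h₂₂.1⟩]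

theorem exists_separating_multipliers (hμ : μ₁ ≤ μ₂) (hδ : δ₁ ≤ δ₂)
    (hconv : Convex ℝ (OmegaW n A B₁ B₂ a b₁ b₂ γ α β μ₁ μ₂ δ₁ δ₂))
    (hfeas : ∀ x, RobustFeasible B₁ B₂ b₁ b₂ α β μ₁ μ₂ δ₁ δ₂ x → 0 ≤ quadFn A a x + γ)
    {x₀ : Fin n → ℝ}
    (hx₀ : ∀ μ ∈ Icc μ₁ μ₂, ∀ δ ∈ Icc δ₁ δ₂, quadFn (B₁ + μ • B₂) (b₁ + δ • b₂) x₀ ∈ Ioo α β) :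
    ∃ c : Fin 5 → ℝ, 0 ≤ c ∧ c 0 = 1 ∧
      ∀ y, 0 ≤ c ⬝ᵥ omegaMap A B₁ B₂ a b₁ b₂ γ α β μ₁ μ₂ δ₁ δ₂ y := by
  rw [omegaW_eq hμ] at hconv
  obtain ⟨c, hc, hc_ne, hsep⟩ := exists_nonneg_dotProduct_nonneg hconv
    (zero_notMem_omegaMap_add hfeas) ⟨0, by simp [omegaMap]⟩
  have hc₀ : 0 < c 0 := (hc 0).lt_of_ne' fun h0 =>
    (hsep _ (mem_range_self (x₀, 1))).not_gt <| dotProduct_neg_of_nonneg hc hc_ne fun i hi =>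
      omegaMap_slater_neg hμ hδ hx₀ fun hi0 => hi (hi0 ▸ h0)
  refine ⟨(c 0)⁻¹ • c, smul_nonneg (inv_nonneg.2 hc₀.le) hc, by simp [hc₀.ne'], fun y => ?_⟩
  rw [smul_dotProduct, smul_eq_mul]
  exact mul_nonneg (inv_nonneg.2 hc₀.le) (hsep _ (mem_range_self y))

theorem lagrangianForm_apply_one (lam₁ lam₂ μb δb μa δa : ℝ) (x : Fin n → ℝ) :
    lagrangianForm A B₁ B₂ a b₁ b₂ γ α β lam₁ lam₂ μb δb μa δa (x, 1) =
      quadFn A a x + γ + lam₁ * (quadFn (B₁ + μb • B₂) (b₁ + δb • b₂) x - β) +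
        lam₂ * (α - quadFn (B₁ + μa • B₂) (b₁ + δa • b₂) x) := by
  simp only [lagrangianForm, _root_.sub_apply, _root_.add_apply, _root_.smul_apply, smul_eq_mul,
    homogenizedForm_apply_one, constraintForm_apply_one]
  ring

theorem lagrangianForm_convex_combination (lam₁ lam₂ δb δa θ μ μ' : ℝ) (y : (Fin n → ℝ) × ℝ) :
    (1 - θ) * lagrangianForm A B₁ B₂ a b₁ b₂ γ α β lam₁ lam₂ μ δb μ' δa y +
        θ * lagrangianForm A B₁ B₂ a b₁ b₂ γ α β lam₁ lam₂ μ' δb μ δa y =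
      lagrangianForm A B₁ B₂ a b₁ b₂ γ α β lam₁ lam₂ ((1 - θ) * μ + θ * μ') δb
        ((1 - θ) * μ' + θ * μ) δa y := by
  have hb := mul_constraintForm_add_mul (B₁ := B₁) (B₂ := B₂) (b₁ := b₁) (b₂ := b₂) β
    (w₁ := 1 - θ) (w₂ := θ) (μ := μ) (μ' := μ') (μ'' := (1 - θ) * μ + θ * μ') (δ := δb)
    (δ' := δb) (δ'' := δb) (by ring) (by ring) y
  have ha := mul_constraintForm_add_mul (B₁ := B₁) (B₂ := B₂) (b₁ := b₁) (b₂ := b₂) α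
    (w₁ := 1 - θ) (w₂ := θ) (μ := μ') (μ' := μ) (μ'' := (1 - θ) * μ' + θ * μ) (δ := δa)
    (δ' := δa) (δ'' := δa) (by ring) (by ring) y
  simp only [lagrangianForm, _root_.sub_apply, _root_.add_apply, _root_.smul_apply, smul_eq_mul]
  linear_combination lam₁ * hb - lam₂ * ha

theorem dotProduct_omegaMap_le_max (hμ : μ₁ ≤ μ₂) {c : Fin 5 → ℝ} (hc₀ : c 0 = 1) {δa δb : ℝ}
    (hb : c 1 * δ₁ + c 2 * δ₂ = (c 1 + c 2) * δb) (ha : c 3 * δ₁ + c 4 * δ₂ = (c 3 + c 4) * δa)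
    (y : (Fin n → ℝ) × ℝ) :
    c ⬝ᵥ omegaMap A B₁ B₂ a b₁ b₂ γ α β μ₁ μ₂ δ₁ δ₂ y ≤
      max (lagrangianForm A B₁ B₂ a b₁ b₂ γ α β (c 1 + c 2) (c 3 + c 4) μ₂ δb μ₁ δa y)
        (lagrangianForm A B₁ B₂ a b₁ b₂ γ α β (c 1 + c 2) (c 3 + c 4) μ₁ δb μ₂ δa y) := by
  have hb' (μ : ℝ) := mul_constraintForm_add_mul (B₁ := B₁) (B₂ := B₂) (b₁ := b₁) (b₂ := b₂)
    (μ := μ) (μ' := μ) (μ'' := μ) β (by ring) hb y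
  have ha' (μ : ℝ) := mul_constraintForm_add_mul (B₁ := B₁) (B₂ := B₂) (b₁ := b₁) (b₂ := b₂)
    (μ := μ) (μ' := μ) (μ'' := μ) α (by ring) ha y
  simp only [dotProduct, Fin.sum_univ_five, omegaMap, lagrangianForm, hc₀, _root_.sub_apply,
    _root_.add_apply, _root_.smul_apply, smul_eq_mul, Fin.isValue, cons_val_zero, cons_val_one,
    cons_val]
  rcases le_total 0 ((1 / 2) * (y.1 ⬝ᵥ (B₂ *ᵥ y.1))) with hR | hR
  · have hle (δ c' : ℝ) :
        constraintForm B₁ B₂ b₁ b₂ μ₁ δ c' y ≤ constraintForm B₁ B₂ b₁ b₂ μ₂ δ c' y := by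
      simp only [constraintForm_apply_affine]; nlinarith
    simp only [max_eq_right (hle _ _), min_eq_left (hle _ _)]
    exact le_max_of_le_left (by linear_combination hb' μ₂ - ha' μ₁)
  · have hle (δ c' : ℝ) :
        constraintForm B₁ B₂ b₁ b₂ μ₂ δ c' y ≤ constraintForm B₁ B₂ b₁ b₂ μ₁ δ c' y := by
      simp only [constraintForm_apply_affine]; nlinarith
    simp only [max_eq_left (hle _ _), min_eq_right (hle _ _)]
    exact le_max_of_le_right (by linear_combination hb' μ₁ - ha' μ₂)

theorem hasRobustCertificate_of_multipliers (hμ : μ₁ ≤ μ₂) (hδ : δ₁ ≤ δ₂) {c : Fin 5 → ℝ}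
    (hc : 0 ≤ c) (hc₀ : c 0 = 1)
    (hsep : ∀ y, 0 ≤ c ⬝ᵥ omegaMap A B₁ B₂ a b₁ b₂ γ α β μ₁ μ₂ δ₁ δ₂ y) :
    HasRobustCertificate A B₁ B₂ a b₁ b₂ γ α β μ₁ μ₂ δ₁ δ₂ := by
  obtain ⟨δb, hδb, hb⟩ := exists_mem_Icc_mul_add_mul_eq_s3 (hc 1) (hc 2) hδ
  obtain ⟨δa, hδa, ha⟩ := exists_mem_Icc_mul_add_mul_eq_s3 (hc 3) (hc 4) hδ
  obtain ⟨θ, ⟨hθ₀, hθ₁⟩, hθ⟩ := QuadraticMap.exists_forall_nonneg_of_max_nonneg _ _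
    fun y => (hsep y).trans (dotProduct_omegaMap_le_max hμ hc₀ hb ha y)
  have hmem (μ μ' : ℝ) (hμ : μ ∈ Icc μ₁ μ₂) (hμ' : μ' ∈ Icc μ₁ μ₂) :
      (1 - θ) * μ + θ * μ' ∈ Icc μ₁ μ₂ :=
    convex_Icc μ₁ μ₂ hμ hμ' (sub_nonneg.2 hθ₁) hθ₀ (sub_add_cancel 1 θ)
  refine ⟨c 1 + c 2, c 3 + c 4, add_nonneg (hc 1) (hc 2), add_nonneg (hc 3) (hc 4), _,
    hmem _ _ (left_mem_Icc.2 hμ) (right_mem_Icc.2 hμ), _,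
    hmem _ _ (right_mem_Icc.2 hμ) (left_mem_Icc.2 hμ), δa, hδa, δb, hδb, by ring, fun x => ?_⟩
  rw [← lagrangianForm_apply_one, ← lagrangianForm_convex_combination]
  exact hθ (x, 1)

theorem nonneg_of_hasRobustCertificate
    (h : HasRobustCertificate A B₁ B₂ a b₁ b₂ γ α β μ₁ μ₂ δ₁ δ₂) {x : Fin n → ℝ}
    (hx : RobustFeasible B₁ B₂ b₁ b₂ α β μ₁ μ₂ δ₁ δ₂ x) : 0 ≤ quadFn A a x + γ := by
  obtain ⟨lam₁, lam₂, hlam₁, hlam₂, μa, hμa, μb, hμb, δa, hδa, δb, hδb, -, hcert⟩ := h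
  nlinarith [hcert x, (hx μb hμb δb hδb).2, (hx μa hμa δa hδa).1]

end RobustSLemma

theorem robust_S_lemma_general (n : ℕ) (A B₁ B₂ : Matrix (Fin n) (Fin n) ℝ)
    (a b₁ b₂ : Fin n → ℝ) (γ α β μ₁ μ₂ δ₁ δ₂ : ℝ)
    (hμ : μ₁ ≤ μ₂) (hδ : δ₁ ≤ δ₂)
    (hconv : Convex ℝ (OmegaW n A B₁ B₂ a b₁ b₂ γ α β μ₁ μ₂ δ₁ δ₂))
    (hSlater : ∃ x₀ : Fin n → ℝ, ∀ μ ∈ Icc μ₁ μ₂, ∀ δ ∈ Icc δ₁ δ₂,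
      α < (1 / 2) * (x₀ ⬝ᵥ ((B₁ + μ • B₂) *ᵥ x₀)) + (b₁ + δ • b₂) ⬝ᵥ x₀ ∧
      (1 / 2) * (x₀ ⬝ᵥ ((B₁ + μ • B₂) *ᵥ x₀)) + (b₁ + δ • b₂) ⬝ᵥ x₀ < β) :
    (∀ x : Fin n → ℝ,
      (∀ μ ∈ Icc μ₁ μ₂, ∀ δ ∈ Icc δ₁ δ₂,
        α ≤ (1 / 2) * (x ⬝ᵥ ((B₁ + μ • B₂) *ᵥ x)) + (b₁ + δ • b₂) ⬝ᵥ x ∧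
        (1 / 2) * (x ⬝ᵥ ((B₁ + μ • B₂) *ᵥ x)) + (b₁ + δ • b₂) ⬝ᵥ x ≤ β) →
      (1 / 2) * (x ⬝ᵥ (A *ᵥ x)) + a ⬝ᵥ x + γ ≥ 0)
    ↔
    (∃ lam₁ lam₂ : ℝ, 0 ≤ lam₁ ∧ 0 ≤ lam₂ ∧
      ∃ μa ∈ Icc μ₁ μ₂, ∃ μb ∈ Icc μ₁ μ₂,
      ∃ δa ∈ Icc δ₁ δ₂, ∃ δb ∈ Icc δ₁ δ₂,
        μa + μb = μ₁ + μ₂ ∧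
        ∀ x : Fin n → ℝ,
          (1 / 2) * (x ⬝ᵥ (A *ᵥ x)) + a ⬝ᵥ x + γ +
          lam₁ * ((1 / 2) * (x ⬝ᵥ ((B₁ + μb • B₂) *ᵥ x)) + (b₁ + δb • b₂) ⬝ᵥ x - β) +
          lam₂ * (α - ((1 / 2) * (x ⬝ᵥ ((B₁ + μa • B₂) *ᵥ x)) + (b₁ + δa • b₂) ⬝ᵥ x))
            ≥ 0) := by
  obtain ⟨x₀, hx₀⟩ := hSlater
  refine ⟨fun hfeas => ?_, fun hcert x hx => nonneg_of_hasRobustCertificate hcert hx⟩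
  obtain ⟨c, hc, hc₀, hsep⟩ := exists_separating_multipliers hμ hδ hconv hfeas hx₀
  exact hasRobustCertificate_of_multipliers hμ hδ hc hc₀ hsep

/-- Theorem 2, a robust S-lemma. -/
theorem robust_S_lemma (n : ℕ) (A B₁ B₂ : Matrix (Fin n) (Fin n) ℝ)
    (a b₁ b₂ : Fin n → ℝ) (γ α β μ₁ μ₂ δ₁ δ₂ : ℝ)
    (hA : A.IsSymm) (hB₁ : B₁.IsSymm) (hB₂ : B₂.IsSymm)
    (hμ : μ₁ ≤ μ₂) (hδ : δ₁ ≤ δ₂) (hαβ : α < β)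
    (hconv : Convex ℝ (OmegaW n A B₁ B₂ a b₁ b₂ γ α β μ₁ μ₂ δ₁ δ₂))
    (hSlater : ∃ x₀ : Fin n → ℝ, ∀ μ ∈ Icc μ₁ μ₂, ∀ δ ∈ Icc δ₁ δ₂,
      α < (1 / 2) * (x₀ ⬝ᵥ ((B₁ + μ • B₂) *ᵥ x₀)) + (b₁ + δ • b₂) ⬝ᵥ x₀ ∧
      (1 / 2) * (x₀ ⬝ᵥ ((B₁ + μ • B₂) *ᵥ x₀)) + (b₁ + δ • b₂) ⬝ᵥ x₀ < β) :
    (∀ x : Fin n → ℝ,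
      (∀ μ ∈ Icc μ₁ μ₂, ∀ δ ∈ Icc δ₁ δ₂,
        α ≤ (1 / 2) * (x ⬝ᵥ ((B₁ + μ • B₂) *ᵥ x)) + (b₁ + δ • b₂) ⬝ᵥ x ∧
        (1 / 2) * (x ⬝ᵥ ((B₁ + μ • B₂) *ᵥ x)) + (b₁ + δ • b₂) ⬝ᵥ x ≤ β) →
      (1 / 2) * (x ⬝ᵥ (A *ᵥ x)) + a ⬝ᵥ x + γ ≥ 0)
    ↔
    (∃ lam₁ lam₂ : ℝ, 0 ≤ lam₁ ∧ 0 ≤ lam₂ ∧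
      ∃ μa ∈ Icc μ₁ μ₂, ∃ μb ∈ Icc μ₁ μ₂,
      ∃ δa ∈ Icc δ₁ δ₂, ∃ δb ∈ Icc δ₁ δ₂,
        μa + μb = μ₁ + μ₂ ∧
        ∀ x : Fin n → ℝ,
          (1 / 2) * (x ⬝ᵥ (A *ᵥ x)) + a ⬝ᵥ x + γ +
          lam₁ * ((1 / 2) * (x ⬝ᵥ ((B₁ + μb • B₂) *ᵥ x)) + (b₁ + δb • b₂) ⬝ᵥ x - β) +
          lam₂ * (α - ((1 / 2) * (x ⬝ᵥ ((B₁ + μa • B₂) *ᵥ x)) + (b₁ + δa • b₂) ⬝ᵥ x))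
            ≥ 0) :=
  robust_S_lemma_general n A B₁ B₂ a b₁ b₂ γ α β μ₁ μ₂ δ₁ δ₂ hμ hδ hconv hSlater
end

section
/- (Sufficiency of the KKT-type conditions, two-sided case.) Let A, B₁, B₂ be real symmetric n×n matrices, a, b₁, b₂ ∈ ℝ^n, and α, β, μ₁, μ₂, δ₁, δ₂ ∈ ℝ with μ₁ ≤ μ₂, δ₁ ≤ δ₂ and α < β. Let x̄ ∈ ℝ^n satisfy α ≤ ½x̄ᵀ(B₁+μB₂)x̄ + (b₁+δb₂)ᵀx̄ ≤ β for all μ ∈ [μ₁,μ₂] and δ ∈ [δ₁,δ₂]. Suppose there exist λ₁, λ₂ ≥ 0, μ_α, μ_β ∈ [μ₁,μ₂] and δ_α, δ_β ∈ [δ₁,δ₂] such that: (a) (A + λ₁(B₁+μ_βB₂) − λ₂(B₁+μ_αB₂))x̄ = −(a + λ₁(b₁+δ_βb₂) − λ₂(b₁+δ_αb₂)); (b) λ₁(½x̄ᵀ(B₁+μ_βB₂)x̄ + (b₁+δ_βb₂)ᵀx̄ − β) = 0 and λ₂(α − (½x̄ᵀ(B₁+μ_αB₂)x̄ + (b₁+δ_αb₂)ᵀx̄))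 = 0; (c) A + λ₁(B₁+μ_βB₂) − λ₂(B₁+μ_αB₂) is positive semidefinite. Then for every x ∈ ℝ^n satisfying α ≤ ½xᵀ(B₁+μB₂)x + (b₁+δb₂)ᵀx ≤ β for all μ ∈ [μ₁,μ₂] and δ ∈ [δ₁,δ₂], one has ½x̄ᵀAx̄ + aᵀx̄ ≤ ½xᵀAx + aᵀx. -/
open Matrix Set

lemma symm_dot_aux (n : ℕ) (M : Matrix (Fin n) (Fin n) ℝ) (hM : M.IsSymm) (x y : Fin n → ℝ) :
    x ⬝ᵥ (M *ᵥ y) = y ⬝ᵥ (M *ᵥ x) := by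
  rw [Matrix.dotProduct_mulVec, ← Matrix.mulVec_transpose, hM, dotProduct_comm]

/-- Sufficiency of the KKT-type conditions, two-sided case. -/
theorem kkt_sufficiency_two_sided (n : ℕ) (A B₁ B₂ : Matrix (Fin n) (Fin n) ℝ)
    (a b₁ b₂ : Fin n → ℝ) (α β μ₁ μ₂ δ₁ δ₂ : ℝ)
    (hA : A.IsSymm) (hB₁ : B₁.IsSymm) (hB₂ : B₂.IsSymm)
    (hμ : μ₁ ≤ μ₂) (hδ : δ₁ ≤ δ₂) (hαβ : α < β)
    (xbar : Fin n → ℝ)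
    (hxbar : ∀ μ ∈ Icc μ₁ μ₂, ∀ δ ∈ Icc δ₁ δ₂,
      α ≤ (1 / 2) * (xbar ⬝ᵥ ((B₁ + μ • B₂) *ᵥ xbar)) + (b₁ + δ • b₂) ⬝ᵥ xbar ∧
      (1 / 2) * (xbar ⬝ᵥ ((B₁ + μ • B₂) *ᵥ xbar)) + (b₁ + δ • b₂) ⬝ᵥ xbar ≤ β)
    (lam₁ lam₂ : ℝ) (hlam₁ : 0 ≤ lam₁) (hlam₂ : 0 ≤ lam₂)
    (μa μb : ℝ) (hμa : μa ∈ Icc μ₁ μ₂) (hμb : μb ∈ Icc μ₁ μ₂)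
    (δa δb : ℝ) (hδa : δa ∈ Icc δ₁ δ₂) (hδb : δb ∈ Icc δ₁ δ₂)
    (ha : (A + lam₁ • (B₁ + μb • B₂) - lam₂ • (B₁ + μa • B₂)) *ᵥ xbar
      = -(a + lam₁ • (b₁ + δb • b₂) - lam₂ • (b₁ + δa • b₂)))
    (hb₁ : lam₁ * ((1 / 2) * (xbar ⬝ᵥ ((B₁ + μb • B₂) *ᵥ xbar))
      + (b₁ + δb • b₂) ⬝ᵥ xbar - β) = 0)
    (hb₂ : lam₂ * (α - ((1 / 2) * (xbar ⬝ᵥ ((B₁ + μa • B₂) *ᵥ xbar))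
      + (b₁ + δa • b₂) ⬝ᵥ xbar)) = 0)
    (hc : ∀ z : Fin n → ℝ,
      0 ≤ z ⬝ᵥ ((A + lam₁ • (B₁ + μb • B₂) - lam₂ • (B₁ + μa • B₂)) *ᵥ z)) :
    ∀ x : Fin n → ℝ,
      (∀ μ ∈ Icc μ₁ μ₂, ∀ δ ∈ Icc δ₁ δ₂,
        α ≤ (1 / 2) * (x ⬝ᵥ ((B₁ + μ • B₂) *ᵥ x)) + (b₁ + δ • b₂) ⬝ᵥ x ∧
        (1 / 2) * (x ⬝ᵥ ((B₁ + μ • B₂) *ᵥ x)) + (b₁ + δ • b₂) ⬝ᵥ x ≤ β) →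
      (1 / 2) * (xbar ⬝ᵥ (A *ᵥ xbar)) + a ⬝ᵥ xbar ≤ (1 / 2) * (x ⬝ᵥ (A *ᵥ x)) + a ⬝ᵥ x := by
  intro x hx
  set M : Matrix (Fin n) (Fin n) ℝ := A + lam₁ • (B₁ + μb • B₂) - lam₂ • (B₁ + μa • B₂) with hM
  set m : Fin n → ℝ := a + lam₁ • (b₁ + δb • b₂) - lam₂ • (b₁ + δa • b₂) with hm
  have hMsymm : M.IsSymm := by
    unfold Matrix.IsSymm at *
    simp [hM, Matrix.transpose_add, Matrix.transpose_sub, Matrix.transpose_smul, hA, hB₁, hB₂]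
  -- minimality of xbar for the Lagrangian quadratic
  have hLag : (1 / 2) * (xbar ⬝ᵥ (M *ᵥ xbar)) + m ⬝ᵥ xbar
      ≤ (1 / 2) * (x ⬝ᵥ (M *ᵥ x)) + m ⬝ᵥ x := by
    have hpsd := hc (x - xbar)
    have hsym : xbar ⬝ᵥ (M *ᵥ x) = x ⬝ᵥ (M *ᵥ xbar) := symm_dot_aux n M hMsymm xbar x
    have hstat : x ⬝ᵥ (M *ᵥ xbar) = x ⬝ᵥ (-m) := by rw [ha]
    have hstat2 : xbar ⬝ᵥ (M *ᵥ xbar) = xbar ⬝ᵥ (-m) := by rw [ha]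
    rw [Matrix.mulVec_sub, dotProduct_sub, sub_dotProduct, sub_dotProduct, hsym, hstat, hstat2,
      dotProduct_neg, dotProduct_neg] at hpsd
    rw [hstat2]
    simp only [dotProduct_neg] at hpsd ⊢
    linarith [hpsd, dotProduct_comm m x, dotProduct_comm m xbar]
  -- expand Lagrangian quadratics
  have hexp : ∀ y : Fin n → ℝ, (1 / 2) * (y ⬝ᵥ (M *ᵥ y)) + m ⬝ᵥ y
      = ((1 / 2) * (y ⬝ᵥ (A *ᵥ y)) + a ⬝ᵥ y)
        + lam₁ * ((1 / 2) * (y ⬝ᵥ ((B₁ + μb • B₂) *ᵥ y)) + (b₁ + δb • b₂) ⬝ᵥ y)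
        - lam₂ * ((1 / 2) * (y ⬝ᵥ ((B₁ + μa • B₂) *ᵥ y)) + (b₁ + δa • b₂) ⬝ᵥ y) := by
    intro y
    simp only [hM, hm, Matrix.add_mulVec, Matrix.sub_mulVec, Matrix.smul_mulVec,
      dotProduct_add, dotProduct_sub, dotProduct_smul, add_dotProduct, sub_dotProduct,
      smul_dotProduct, smul_eq_mul]
    ring
  rw [hexp x, hexp xbar] at hLag
  have hfx := hx μb hμb δb hδb
  have hfx2 := hx μa hμa δa hδa
  nlinarith [mul_le_mul_of_nonneg_left hfx.2 hlam₁, mul_le_mul_of_nonneg_left hfx2.1 hlam₂]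
end

section
/- (Counterexample to the homogenization argument of Jeyakumar–Li.) Let n ≥ 5, s = (1,...,1) ∈ ℝ^n, γ = √(n/2) − 1/4, and define the symmetric (n+1)×(n+1) matrices H₀ with blocks (I_n, s; sᵀ, 2γ), W₁ with blocks (2I_n, s; sᵀ, −2), and W₂ with blocks (2I_n, s; sᵀ, 0). Then the point y = (−s, 1) ∈ ℝ^{n+1} satisfies ½yᵀH₀y = ½(−n + 2γ) < 0, and for every μ ∈ [−1,1], ½yᵀ(W₁ + μW₂)y = −1 < 0. In particular, the system ½yᵀH₀y < 0 together with ½yᵀ(W₁+μW₂)y < 0 for all μ ∈ [−1,1] admits a solution in ℝ^{n+1}. -/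
open Matrix Set

lemma quad_block_compute (n : ℕ) (s : Fin n → ℝ) (hs : ∀ i, s i = 1) (a d : ℝ) :
    ((Sum.elim (-s) (fun _ => 1) : Fin n ⊕ Fin 1 → ℝ) ⬝ᵥ
      ((Matrix.fromBlocks (a • (1 : Matrix (Fin n) (Fin n) ℝ))
        (Matrix.of fun i _ => s i) (Matrix.of fun _ j => s j) !![d]) *ᵥ
        Sum.elim (-s) (fun _ => 1))) = a * n - 2 * n + d := by
  have hs' : s = fun _ => 1 := funext hs
  subst hs'
  simp [dotProduct, mulVec, Fintype.sum_sum_type, Matrix.fromBlocks, Matrix.one_apply,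
    Finset.sum_ite_eq, Finset.mul_sum, Finset.sum_add_distrib]
  ring

/-- Counterexample to the homogenization argument of Jeyakumar–Li.
With `H₀ = (Iₙ, s; sᵀ, 2γ)`, `W₁ = (2Iₙ, s; sᵀ, −2)`, `W₂ = (2Iₙ, s; sᵀ, 0)` and
`γ = √(n/2) − 1/4`, the point `y = (−s, 1)` satisfies `½yᵀH₀y = ½(−n + 2γ) < 0` and
`½yᵀ(W₁+μW₂)y = −1 < 0` for every `μ ∈ [−1,1]`; in particular the homogeneous strict
system admits a solution. -/
theorem example_homogenized_system_solvable (n : ℕ) (hn : 5 ≤ n)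
    (s : Fin n → ℝ) (hs : ∀ i, s i = 1)
    (γ : ℝ) (hγ : γ = Real.sqrt ((n : ℝ) / 2) - 1 / 4)
    (H₀ W₁ W₂ : Matrix (Fin n ⊕ Fin 1) (Fin n ⊕ Fin 1) ℝ)
    (hH₀ : H₀ = Matrix.fromBlocks (1 : Matrix (Fin n) (Fin n) ℝ)
      (Matrix.of fun i _ => s i) (Matrix.of fun _ j => s j) !![2 * γ])
    (hW₁ : W₁ = Matrix.fromBlocks ((2 : ℝ) • (1 : Matrix (Fin n) (Fin n) ℝ))
      (Matrix.of fun i _ => s i) (Matrix.of fun _ j => s j) !![-2])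
    (hW₂ : W₂ = Matrix.fromBlocks ((2 : ℝ) • (1 : Matrix (Fin n) (Fin n) ℝ))
      (Matrix.of fun i _ => s i) (Matrix.of fun _ j => s j) !![0])
    (y : Fin n ⊕ Fin 1 → ℝ) (hy : y = Sum.elim (-s) (fun _ => 1)) :
    ((1 / 2) * (y ⬝ᵥ (H₀ *ᵥ y)) = (1 / 2) * (-(n : ℝ) + 2 * γ)) ∧
    ((1 / 2) * (-(n : ℝ) + 2 * γ) < 0) ∧
    (∀ μ ∈ Icc (-1 : ℝ) 1, (1 / 2) * (y ⬝ᵥ ((W₁ + μ • W₂) *ᵥ y)) = -1) ∧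
    (∃ z : Fin n ⊕ Fin 1 → ℝ,
      (1 / 2) * (z ⬝ᵥ (H₀ *ᵥ z)) < 0 ∧
      ∀ μ ∈ Icc (-1 : ℝ) 1, (1 / 2) * (z ⬝ᵥ ((W₁ + μ • W₂) *ᵥ z)) < 0) := by
  have h0 : y ⬝ᵥ (H₀ *ᵥ y) = -(n : ℝ) + 2 * γ := by
    have := quad_block_compute n s hs 1 (2 * γ)
    rw [one_smul] at this
    rw [hH₀, hy, this]; ring
  have h1 : y ⬝ᵥ (W₁ *ᵥ y) = -2 := by
    have := quad_block_compute n s hs 2 (-2)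
    rw [hW₁, hy, this]; ring
  have h2 : y ⬝ᵥ (W₂ *ᵥ y) = 0 := by
    have := quad_block_compute n s hs 2 0
    rw [hW₂, hy, this]; ring
  have hneg : (1 / 2 : ℝ) * (-(n : ℝ) + 2 * γ) < 0 := by
    have hn' : (5 : ℝ) ≤ (n : ℝ) := by exact_mod_cast hn
    have h1 : Real.sqrt ((n : ℝ) / 2) ^ 2 = (n : ℝ) / 2 :=
      Real.sq_sqrt (by linarith)
    have h2 : 0 ≤ Real.sqrt ((n : ℝ) / 2) := Real.sqrt_nonneg _
    nlinarith [sq_nonneg (Real.sqrt ((n : ℝ) / 2) - 2)]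
  have hμ : ∀ μ ∈ Icc (-1 : ℝ) 1,
      (1 / 2) * (y ⬝ᵥ ((W₁ + μ • W₂) *ᵥ y)) = -1 := by
    intro μ _
    rw [Matrix.add_mulVec, Matrix.smul_mulVec, dotProduct_add, dotProduct_smul,
      h1, h2]
    simp
  refine ⟨by rw [h0], hneg, hμ, y, ?_, ?_⟩
  · rw [h0]; exact hneg
  · intro μ hμ'
    rw [hμ μ hμ']; norm_num
end

section
/- (Convexity of the 5-tuple quadratic image in the example.) Let n ≥ 5, s = (1,...,1) ∈ ℝ^n, γ = √(n/2) − 1/4, and define the symmetric (n+1)×(n+1) matrices H₀ with blocks (I_n, s; sᵀ, 2γ), H₁ with blocks (0_{n×n}, 0; 0ᵀ, −2), H₂ with blocks (4I_n, 2s; 2sᵀ, −2), H₃ with blocks (0_{n×n}, 2s; 2sᵀ, 2), and H₄ with blocks (4I_n, 0; 0ᵀ, 2). Then the set {(yᵀH₀y, yᵀH₁y, yᵀH₂y, yᵀH₃y, yᵀH₄y) : y ∈ ℝ^{n+1}} is a convex subset of ℝ⁵. -/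
/-!
Each `Hₖ` is an arrow matrix `(ρ Iₙ, σ s; σ sᵀ, τ)`, so for `y = (x, t)` its quadratic form is
`τ t² + 2σ · tS + ρ Q` with `S = ∑ xᵢ`, `Q = ∑ xᵢ²`. The five-tuple is thus a linear image of the
moment vector `(t², tS, Q)`. By Cauchy–Schwarz, and because for `n ≥ 2` any `(S, Q)` with
`S² ≤ n Q` is attained, the moment vectors fill exactly the rotated cone
`{(a, b, c) | a, c ≥ 0, b² ≤ n a c}`, which is convex; hence so is its linear image.
-/

open Matrix Set

def rotatedCone (N : ℝ) : Set (Fin 3 → ℝ) :=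
  {p | 0 ≤ p 0 ∧ 0 ≤ p 2 ∧ p 1 ^ 2 ≤ N * (p 0 * p 2)}

lemma two_mul_mul_le_of_sq_le {N a b c a' b' c' : ℝ} (hN : 0 ≤ N) (ha : 0 ≤ a) (hc : 0 ≤ c)
    (ha' : 0 ≤ a') (hc' : 0 ≤ c') (hb : b ^ 2 ≤ N * (a * c)) (hb' : b' ^ 2 ≤ N * (a' * c')) :
    2 * b * b' ≤ N * (a * c' + a' * c) := by
  refine le_of_sq_le_sq ?_ (by positivity)
  calc (2 * b * b') ^ 2 = 4 * b ^ 2 * b' ^ 2 := by ring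
    _ ≤ 4 * (N * (a * c)) * (N * (a' * c')) := by gcongr
    _ = N ^ 2 * (4 * (a * c') * (a' * c)) := by ring
    _ ≤ N ^ 2 * (a * c' + a' * c) ^ 2 := by gcongr; nlinarith [sq_nonneg (a * c' - a' * c)]
    _ = (N * (a * c' + a' * c)) ^ 2 := by ring

theorem convex_rotatedCone {N : ℝ} (hN : 0 ≤ N) : Convex ℝ (rotatedCone N) := by
  rintro p ⟨ha, hc, hb⟩ q ⟨ha', hc', hb'⟩ α β hα hβ -
  have hcross := two_mul_mul_le_of_sq_le hN ha hc ha' hc' hb hb'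
  refine ⟨?_, ?_, ?_⟩ <;> simp only [Pi.add_apply, Pi.smul_apply, smul_eq_mul]
  · positivity
  · positivity
  · nlinarith [mul_le_mul_of_nonneg_left hb (sq_nonneg α),
      mul_le_mul_of_nonneg_left hb' (sq_nonneg β),
      mul_le_mul_of_nonneg_left hcross (mul_nonneg hα hβ)]

lemma exists_mul_eq_of_sq_le_mul {N a b c : ℝ} (hN : 0 ≤ N) (ha : 0 ≤ a) (hc : 0 ≤ c)
    (hb : b ^ 2 ≤ N * (a * c)) : ∃ t u, t ^ 2 = a ∧ t * u = b ∧ u ^ 2 ≤ N * c := by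
  rcases ha.eq_or_lt with rfl | ha
  · obtain rfl : b = 0 := by simpa using hb
    exact ⟨0, 0, by ring, by ring, by simpa using mul_nonneg hN hc⟩
  · refine ⟨√a, b / √a, Real.sq_sqrt ha.le, by field_simp, ?_⟩
    rw [div_pow, Real.sq_sqrt ha.le, div_le_iff₀ ha]
    linarith

section
variable {ι : Type*} [Fintype ι]

lemma exists_sum_eq_sum_sq_eq (hι : 1 < Fintype.card ι) {u c : ℝ}
    (huc : u ^ 2 ≤ Fintype.card ι * c) : ∃ x : ι → ℝ, ∑ i, x i = u ∧ ∑ i, x i ^ 2 = c := by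
  classical
  -- the mean `u / N` fixes the sum; a multiple of `eᵢ - eⱼ` then adjusts the sum of squares
  obtain ⟨i, j, hij⟩ := Fintype.one_lt_card_iff.mp hι
  set N : ℝ := (Fintype.card ι : ℝ)
  have hN : 0 < N := by positivity
  obtain ⟨r, hr⟩ : ∃ r : ℝ, 2 * r ^ 2 = c - u ^ 2 / N := by
    refine ⟨√((c - u ^ 2 / N) / 2), ?_⟩
    have : u ^ 2 / N ≤ c := by rwa [div_le_iff₀ hN, mul_comm]
    rw [Real.sq_sqrt (by linarith)]
    ring
  let d : ι → ℝ := Pi.single i 1 - Pi.single j 1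
  have hd : ∑ k, d k = 0 := by simp [d]
  have hd2 : ∑ k, d k ^ 2 = 2 := by
    norm_num [d, sq, mul_sub, Pi.single_apply, hij, hij.symm, Finset.sum_sub_distrib]
  refine ⟨fun k => u / N + r * d k, ?_, ?_⟩
  · simp only [Finset.sum_add_distrib, Finset.sum_const, Finset.card_univ, nsmul_eq_mul,
      ← Finset.mul_sum, hd, mul_zero, add_zero, N]
    field_simp
  · have hsq : ∀ k, (u / N + r * d k) ^ 2 =
        (u / N) ^ 2 + 2 * (u / N) * r * d k + r ^ 2 * d k ^ 2 := fun k => by ring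
    have hmean : N * (u / N) ^ 2 = u ^ 2 / N := by field_simp
    simp only [hsq, Finset.sum_add_distrib, ← Finset.mul_sum, hd, hd2, Finset.sum_const,
      Finset.card_univ, nsmul_eq_mul]
    linarith

def blockMoments (y : ι ⊕ Fin 1 → ℝ) : Fin 3 → ℝ :=
  ![y (.inr 0) ^ 2, y (.inr 0) * ∑ i, y (.inl i), ∑ i, y (.inl i) ^ 2]

lemma blockMoments_mem_rotatedCone (y : ι ⊕ Fin 1 → ℝ) :
    blockMoments y ∈ rotatedCone (Fintype.card ι) := by
  have hCS := sq_sum_le_card_mul_sum_sq (s := Finset.univ) (f := fun i => y (.inl i))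
  rw [Finset.card_univ] at hCS
  refine ⟨sq_nonneg _, Finset.sum_nonneg fun i _ => sq_nonneg _, ?_⟩
  simp only [blockMoments, cons_val_zero, cons_val_one, cons_val_two, tail_cons, head_cons,
    mul_pow]
  nlinarith [mul_le_mul_of_nonneg_left hCS (sq_nonneg (y (.inr 0)))]

theorem range_blockMoments (hι : 1 < Fintype.card ι) :
    range (blockMoments (ι := ι)) = rotatedCone (Fintype.card ι) := by
  refine Subset.antisymm (range_subset_iff.mpr blockMoments_mem_rotatedCone) ?_
  rintro p ⟨ha, hc, hb⟩
  obtain ⟨t, u, ht, htu, hu⟩ := exists_mul_eq_of_sq_le_mul (Nat.cast_nonneg _) ha hc hb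
  obtain ⟨x, hsum, hsq⟩ := exists_sum_eq_sum_sq_eq hι hu
  refine ⟨Sum.elim x fun _ => t, funext fun k => ?_⟩
  fin_cases k <;> simp [blockMoments, ht, hsum, hsq, htu]

def arrowMatrix [DecidableEq ι] (ρ σ τ : ℝ) : Matrix (ι ⊕ Fin 1) (ι ⊕ Fin 1) ℝ :=
  fromBlocks (ρ • 1) (of fun _ _ => σ) (of fun _ _ => σ) !![τ]

lemma dotProduct_arrowMatrix_mulVec [DecidableEq ι] (ρ σ τ : ℝ) (y : ι ⊕ Fin 1 → ℝ) :
    y ⬝ᵥ (arrowMatrix ρ σ τ *ᵥ y) = ![τ, 2 * σ, ρ] ⬝ᵥ blockMoments y := by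
  have h : ∑ i, y (.inl i) * (ρ * y (.inl i) + σ * y (.inr 0)) =
      ρ * ∑ i, y (.inl i) ^ 2 + σ * y (.inr 0) * ∑ i, y (.inl i) := by
    rw [Finset.mul_sum, Finset.mul_sum, ← Finset.sum_add_distrib]
    exact Finset.sum_congr rfl fun _ _ => by ring
  simp only [dotProduct, mulVec, arrowMatrix, blockMoments, fromBlocks, of_apply,
    Fintype.sum_sum_type, Finset.univ_unique, Fin.default_eq_zero, Finset.sum_singleton,
    Sum.elim_inl, Sum.elim_inr, Matrix.smul_apply, one_apply, smul_eq_mul, mul_ite, mul_one,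
    mul_zero, ite_mul, zero_mul, Finset.sum_ite_eq, Finset.mem_univ, if_true, cons_val_fin_one, Fin.sum_univ_three,
    cons_val_zero, cons_val_one, cons_val_two, head_cons, tail_cons]
  rw [h, ← Finset.mul_sum]
  ring

theorem convex_range_arrowMatrix_quadForms [DecidableEq ι] (hι : 1 < Fintype.card ι) {m : ℕ}
    (ρ σ τ : Fin m → ℝ) :
    Convex ℝ
      (range fun y : ι ⊕ Fin 1 → ℝ => fun k => y ⬝ᵥ (arrowMatrix (ρ k) (σ k) (τ k) *ᵥ y)) := by
  let M : Matrix (Fin m) (Fin 3) ℝ := of fun k => ![τ k, 2 * σ k, ρ k]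
  have hM : (fun y : ι ⊕ Fin 1 → ℝ => fun k => y ⬝ᵥ (arrowMatrix (ρ k) (σ k) (τ k) *ᵥ y)) =
      M.mulVecLin ∘ blockMoments := by
    ext y k
    simp [dotProduct_arrowMatrix_mulVec, M, mulVec]
  rw [hM, range_comp, range_blockMoments hι]
  exact (convex_rotatedCone (Nat.cast_nonneg _)).linear_image _

end

theorem example_five_tuple_image_convex_general (n : ℕ) (hn : 5 ≤ n)
    (s : Fin n → ℝ) (hs : ∀ i, s i = 1)
    (γ : ℝ)
    (H₀ H₁ H₂ H₃ H₄ : Matrix (Fin n ⊕ Fin 1) (Fin n ⊕ Fin 1) ℝ)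
    (hH₀ : H₀ = Matrix.fromBlocks (1 : Matrix (Fin n) (Fin n) ℝ)
      (Matrix.of fun i _ => s i) (Matrix.of fun _ j => s j) !![2 * γ])
    (hH₁ : H₁ = Matrix.fromBlocks (0 : Matrix (Fin n) (Fin n) ℝ) 0 0 !![-2])
    (hH₂ : H₂ = Matrix.fromBlocks ((4 : ℝ) • (1 : Matrix (Fin n) (Fin n) ℝ))
      (Matrix.of fun i _ => 2 * s i) (Matrix.of fun _ j => 2 * s j) !![-2])
    (hH₃ : H₃ = Matrix.fromBlocks (0 : Matrix (Fin n) (Fin n) ℝ)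
      (Matrix.of fun i _ => 2 * s i) (Matrix.of fun _ j => 2 * s j) !![2])
    (hH₄ : H₄ = Matrix.fromBlocks ((4 : ℝ) • (1 : Matrix (Fin n) (Fin n) ℝ)) 0 0 !![2]) :
    Convex ℝ (Set.range (fun y : Fin n ⊕ Fin 1 → ℝ =>
      (![y ⬝ᵥ (H₀ *ᵥ y), y ⬝ᵥ (H₁ *ᵥ y), y ⬝ᵥ (H₂ *ᵥ y),
         y ⬝ᵥ (H₃ *ᵥ y), y ⬝ᵥ (H₄ *ᵥ y)] : Fin 5 → ℝ))) := by
  simp only [hs, mul_one] at hH₀ hH₂ hH₃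
  have h₀ : H₀ = arrowMatrix 1 1 (2 * γ) := by rw [hH₀, arrowMatrix, one_smul]
  have h₁ : H₁ = arrowMatrix 0 0 (-2) := by rw [hH₁, arrowMatrix, zero_smul]; rfl
  have h₂ : H₂ = arrowMatrix 4 2 (-2) := hH₂
  have h₃ : H₃ = arrowMatrix 0 2 2 := by rw [hH₃, arrowMatrix, zero_smul]
  have h₄ : H₄ = arrowMatrix 4 0 2 := by rw [hH₄, arrowMatrix]; rfl
  convert convex_range_arrowMatrix_quadForms (ι := Fin n) (by simp; omega)
    ![1, 0, 4, 0, 4] ![1, 0, 2, 2, 0] ![2 * γ, -2, -2, 2, 2] using 3 with y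
  ext k
  fin_cases k <;> simp [h₀, h₁, h₂, h₃, h₄]

/-- Convexity of the 5-tuple quadratic image in the example.
With `H₀ = (Iₙ, s; sᵀ, 2γ)`, `H₁ = (0, 0; 0ᵀ, −2)`, `H₂ = (4Iₙ, 2s; 2sᵀ, −2)`,
`H₃ = (0, 2s; 2sᵀ, 2)`, `H₄ = (4Iₙ, 0; 0ᵀ, 2)` and `γ = √(n/2) − 1/4`, `n ≥ 5`, the joint
image of the five quadratic forms is a convex subset of `ℝ⁵`. -/
theorem example_five_tuple_image_convex (n : ℕ) (hn : 5 ≤ n)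
    (s : Fin n → ℝ) (hs : ∀ i, s i = 1)
    (γ : ℝ) (hγ : γ = Real.sqrt ((n : ℝ) / 2) - 1 / 4)
    (H₀ H₁ H₂ H₃ H₄ : Matrix (Fin n ⊕ Fin 1) (Fin n ⊕ Fin 1) ℝ)
    (hH₀ : H₀ = Matrix.fromBlocks (1 : Matrix (Fin n) (Fin n) ℝ)
      (Matrix.of fun i _ => s i) (Matrix.of fun _ j => s j) !![2 * γ])
    (hH₁ : H₁ = Matrix.fromBlocks (0 : Matrix (Fin n) (Fin n) ℝ) 0 0 !![-2])
    (hH₂ : H₂ = Matrix.fromBlocks ((4 : ℝ) • (1 : Matrix (Fin n) (Fin n) ℝ))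
      (Matrix.of fun i _ => 2 * s i) (Matrix.of fun _ j => 2 * s j) !![-2])
    (hH₃ : H₃ = Matrix.fromBlocks (0 : Matrix (Fin n) (Fin n) ℝ)
      (Matrix.of fun i _ => 2 * s i) (Matrix.of fun _ j => 2 * s j) !![2])
    (hH₄ : H₄ = Matrix.fromBlocks ((4 : ℝ) • (1 : Matrix (Fin n) (Fin n) ℝ)) 0 0 !![2]) :
    Convex ℝ (Set.range (fun y : Fin n ⊕ Fin 1 → ℝ =>
      (![y ⬝ᵥ (H₀ *ᵥ y), y ⬝ᵥ (H₁ *ᵥ y), y ⬝ᵥ (H₂ *ᵥ y),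
         y ⬝ᵥ (H₃ *ᵥ y), y ⬝ᵥ (H₄ *ᵥ y)] : Fin 5 → ℝ))) :=
  example_five_tuple_image_convex_general n hn s hs γ H₀ H₁ H₂ H₃ H₄ hH₀ hH₁ hH₂ hH₃ hH₄
end
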